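/- arXiv:2604.04201 — 6 statements merged into one kernel-verified Lean document; each statement's English description precedes it below -/
import Mathlib

section
/- Let w₀>0, E>0, let ρ(t;w₀) solve ρ̈=−w₀²·g(ρ)·g'(ρ) with ρ(0)=0, ρ̇(0)=√(2E), and define z(t;w₀) = w₀·∫₀^t g(ρ(s;w₀))² ds. Then the partial derivative of the vertical coordinate with respect to w₀ factorizes as z_{w₀}(t;w₀) = −(1/w₀)·ρ̇(t;w₀)·ρ_{w₀}(t;w₀), where ρ_{w₀}=∂ρ/∂w₀. -/
noncomputable section

/-- The radial (cylindrical) coordinate on `ℝ³`. -/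
def rad (q : ℝ × ℝ × ℝ) : ℝ := Real.sqrt (q.1 ^ 2 + q.2.1 ^ 2)

/-- The class `𝔉` of weight functions. -/
structure MemF (f : ℝ → ℝ) : Prop where
  cont : ContinuousOn f (Set.Ici 0)
  zero : f 0 = 0
  pos : ∀ r : ℝ, 0 < r → 0 < f r
  smooth : ContDiffOn ℝ 2 f (Set.Ioi 0)
  ratio_ext : ∃ c : ℝ, Filter.Tendsto (fun r : ℝ => f r * deriv f r / r)
      (nhdsWithin 0 (Set.Ioi 0)) (nhds c)
  strictMono : StrictMonoOn f (Set.Ici 0)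
  tendsto_top : Filter.Tendsto f Filter.atTop Filter.atTop
  sq_div_deriv : Filter.Tendsto (fun r : ℝ => f r ^ 2 / deriv f r) Filter.atTop Filter.atTop

/-- The odd extension of `f`. -/
def oddExt (f : ℝ → ℝ) (x : ℝ) : ℝ := if 0 ≤ x then f x else -f (-x)

/-!
Write `A(w) = ∫₀ᵗ g(ρ(w,s))² ds`, `Q(w) = ∫₀ᵗ ρ'(w,s)² ds` and `φ = g g'`, so that `(g²)' = 2φ`
(at `0` this is where `f f' → 0` enters). Energy conservation `ρ'² + w² g(ρ)² = c²`, with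
`c = ρ'(w,0)` independent of `w`, gives `w² A(w) = c² t - Q(w)`. Nothing is known about `∂_w ρ'`,
so `Q` is not differentiated under the integral; instead, integrating by parts,
`Q(w) - Q(w₀) = (ρ'(w,t) + ρ'(w₀,t)) (ρ(w,t) - ρ(w₀,t))`
`             + ∫₀ᵗ (w² φ(ρ(w,s)) + w₀² φ(ρ(w₀,s))) (ρ(w,s) - ρ(w₀,s)) ds`,
and each term is a continuous factor times a difference of `ρ`, hence differentiable at `w₀`.
Differentiating `w² A(w)` both ways and comparing with `(w A(w))' = A + w₀ A'` gives the formula.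
-/

open Filter Set Topology Function

section OddExtension

variable {f : ℝ → ℝ}

theorem oddExt_of_nonneg {x : ℝ} (hx : 0 ≤ x) : oddExt f x = f x := if_pos hx

theorem oddExt_neg (h0 : f 0 = 0) (x : ℝ) : oddExt f (-x) = -oddExt f x := by
  rcases lt_trichotomy x 0 with hx | rfl | hx
  · simp [oddExt, hx.le, not_le.mpr hx]
  · simp [oddExt, h0]
  · simp [oddExt, hx.le, not_le.mpr (neg_neg_of_pos hx)]

theorem abs_oddExt (hf : ∀ r, 0 ≤ r → 0 ≤ f r) (x : ℝ) : |oddExt f x| = f |x| := by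
  rcases le_or_gt 0 x with hx | hx
  · rw [oddExt_of_nonneg hx, abs_of_nonneg hx, abs_of_nonneg (hf x hx)]
  · rw [oddExt, if_neg hx.not_ge, abs_neg, abs_of_neg hx,
      abs_of_nonneg (hf _ (neg_nonneg.2 hx.le))]

theorem continuous_oddExt (hf : ContinuousOn f (Ici 0)) (h0 : f 0 = 0) :
    Continuous (oddExt f) := by
  refine continuous_if_le continuous_const continuous_id hf
    (hf.comp continuous_neg.continuousOn fun x hx => ?_).neg fun x hx => ?_
  · simpa using hx
  · simp [← hx, h0]

theorem hasDerivAt_oddExt_of_ne (h0 : f 0 = 0)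
    (hf : ∀ r, 0 < r → HasDerivAt f (deriv f r) r) {x : ℝ} (hx : x ≠ 0) :
    HasDerivAt (oddExt f) (deriv f |x|) x := by
  rcases hx.lt_or_gt with hx | hx
  · have h := ((hf (-x) (neg_pos.mpr hx)).congr_of_eventuallyEq
      (eventually_of_mem (Ici_mem_nhds (neg_pos.mpr hx)) fun y hy => oddExt_of_nonneg hy)).comp x
        (hasDerivAt_neg x)
    rw [abs_of_neg hx, show deriv f (-x) = -(deriv f (-x) * -1) by ring]
    exact h.neg.congr_of_eventuallyEq (Eventually.of_forall fun y => by simp [oddExt_neg h0])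
  · rw [abs_of_pos hx]
    exact (hf x hx).congr_of_eventuallyEq
      (eventually_of_mem (Ici_mem_nhds hx) fun y hy => oddExt_of_nonneg hy)

end OddExtension

namespace MemF

variable {f : ℝ → ℝ} (hf : MemF f)
include hf

theorem nonneg {r : ℝ} (hr : 0 ≤ r) : 0 ≤ f r := by
  rcases hr.eq_or_lt with rfl | hr
  · exact hf.zero.ge
  · exact (hf.pos r hr).le

theorem hasDerivAt {r : ℝ} (hr : 0 < r) : HasDerivAt f (deriv f r) r :=
  ((hf.smooth.contDiffAt (Ioi_mem_nhds hr)).differentiableAt (by norm_num)).hasDerivAt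

theorem continuousOn_deriv : ContinuousOn (deriv f) (Ioi 0) :=
  hf.smooth.continuousOn_deriv_of_isOpen isOpen_Ioi (by norm_num)

theorem tendsto_mul_deriv : Tendsto (fun r => f r * deriv f r) (𝓝[>] 0) (𝓝 0) := by
  obtain ⟨c, hc⟩ := hf.ratio_ext
  have h := hc.mul (tendsto_id.mono_left nhdsWithin_le_nhds : Tendsto id (𝓝[>] (0 : ℝ)) (𝓝 0))
  rw [mul_zero] at h
  refine h.congr' (eventually_of_mem self_mem_nhdsWithin fun r (hr : 0 < r) => ?_)
  simp [div_mul_cancel₀ _ hr.ne']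

theorem deriv_oddExt {x : ℝ} (hx : x ≠ 0) : deriv (oddExt f) x = deriv f |x| :=
  (hasDerivAt_oddExt_of_ne hf.zero (fun _ hr => hf.hasDerivAt hr) hx).deriv

theorem continuous_oddExt_mul_deriv : Continuous fun x => oddExt f x * deriv (oddExt f) x := by
  refine continuous_iff_continuousAt.2 fun x => ?_
  rcases eq_or_ne x 0 with rfl | hx
  · rw [← continuousWithinAt_compl_self, ContinuousWithinAt, oddExt_of_nonneg le_rfl, hf.zero,
      zero_mul, tendsto_zero_iff_norm_tendsto_zero]
    have h := (hf.tendsto_mul_deriv.comp tendsto_abs_nhdsNE_zero).norm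
    rw [norm_zero] at h
    refine h.congr' (eventually_of_mem self_mem_nhdsWithin fun y (hy : y ≠ 0) => ?_)
    simp [hf.deriv_oddExt hy, abs_oddExt (fun _ => hf.nonneg),
      abs_of_nonneg (hf.nonneg (abs_nonneg y))]
  · have hcont : ContinuousAt (fun y => oddExt f y * deriv f |y|) x :=
      (continuous_oddExt hf.cont hf.zero).continuousAt.mul
        ((hf.continuousOn_deriv.continuousAt (Ioi_mem_nhds (abs_pos.2 hx))).comp
          continuous_abs.continuousAt)
    exact hcont.congr (eventually_of_mem (isOpen_ne.mem_nhds hx) fun y (hy : y ≠ 0) => by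
      simp only [hf.deriv_oddExt hy])

theorem hasDerivAt_oddExt_sq (x : ℝ) :
    HasDerivAt (fun y => oddExt f y ^ 2) (2 * (oddExt f x * deriv (oddExt f) x)) x := by
  refine hasDerivAt_of_hasDerivAt_of_ne' (x := 0)
    (g := fun y => 2 * (oddExt f y * deriv (oddExt f) y)) (fun y hy => ?_)
    ((continuous_oddExt hf.cont hf.zero).pow 2).continuousAt
    (continuous_const.mul hf.continuous_oddExt_mul_deriv).continuousAt x
  rw [hf.deriv_oddExt hy]
  exact ((hasDerivAt_oddExt_of_ne hf.zero (fun _ hr => hf.hasDerivAt hr) hy).pow 2).congr_deriv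
    (by ring)

end MemF

section ParametricDerivative

theorem hasDerivAt_mul_sub_of_continuousAt {c h : ℝ → ℝ} {h' x : ℝ} (hc : ContinuousAt c x)
    (hh : HasDerivAt h h' x) : HasDerivAt (fun y => c y * (h y - h x)) (c x * h') x := by
  rw [hasDerivAt_iff_tendsto_slope] at hh ⊢
  refine ((hc.tendsto.mono_left nhdsWithin_le_nhds).mul hh).congr fun y => ?_
  simp only [slope_def_field, sub_self, mul_zero, sub_zero]
  ring

variable {G H H' : ℝ → ℝ → ℝ}

theorem hasDerivAt_integral_mul_sub (hG : Continuous (uncurry G)) (hH : Continuous (uncurry H))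
    (hH' : Continuous (uncurry H')) (hderiv : ∀ w s, HasDerivAt (H · s) (H' w s) w)
    (a b w₀ : ℝ) :
    HasDerivAt (fun w => ∫ s in a..b, G w s * (H w s - H w₀ s))
      (∫ s in a..b, G w₀ s * H' w₀ s) w₀ := by
  have hK := (isCompact_closedBall w₀ 1).prod (isCompact_uIcc (a := a) (b := b))
  obtain ⟨CG, hCG⟩ := hK.exists_bound_of_continuousOn hG.continuousOn
  obtain ⟨CH, hCH⟩ := hK.exists_bound_of_continuousOn hH'.continuousOn
  have hslope : ∀ w s, slope (H · s) w₀ w = (H w s - H w₀ s) / (w - w₀) := fun w s => by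
    rw [slope_def_field]
  have hlim : Tendsto (fun w => ∫ s in a..b, G w s * ((H w s - H w₀ s) / (w - w₀))) (𝓝[≠] w₀)
      (𝓝 (∫ s in a..b, G w₀ s * H' w₀ s)) := by
    refine intervalIntegral.tendsto_integral_filter_of_dominated_convergence (fun _ => CG * CH)
      (Eventually.of_forall fun w => Continuous.aestronglyMeasurable (by fun_prop))
      ?_ intervalIntegrable_const (MeasureTheory.ae_of_all _ fun s _ => ?_)
    · filter_upwards [mem_nhdsWithin_of_mem_nhds (Metric.closedBall_mem_nhds w₀ one_pos)]
        with w hw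
      refine MeasureTheory.ae_of_all _ fun s hs => ?_
      have hs' : s ∈ uIcc a b := uIoc_subset_uIcc hs
      have hmvt : ‖H w s - H w₀ s‖ ≤ CH * ‖w - w₀‖ :=
        (convex_closedBall w₀ 1).norm_image_sub_le_of_norm_hasDerivWithin_le
          (fun u _ => (hderiv u s).hasDerivWithinAt) (fun u hu => hCH (u, s) ⟨hu, hs'⟩)
          (Metric.mem_closedBall_self zero_le_one) hw
      have hquot : ‖H w s - H w₀ s‖ / ‖w - w₀‖ ≤ CH := by
        rcases eq_or_ne w w₀ with rfl | hne
        · simp [(norm_nonneg _).trans (hCH (w, s) ⟨hw, hs'⟩)]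
        · rwa [div_le_iff₀ (norm_pos_iff.2 (sub_ne_zero.2 hne))]
      rw [norm_mul, norm_div]
      exact mul_le_mul (hCG (w, s) ⟨hw, hs'⟩) hquot (by positivity)
        ((norm_nonneg _).trans (hCG (w, s) ⟨hw, hs'⟩))
    · have hGs : Continuous (G · s) := hG.comp (Continuous.prodMk_left s)
      simpa only [hslope] using (hGs.continuousAt.tendsto.mono_left nhdsWithin_le_nhds).mul
        (hasDerivAt_iff_tendsto_slope.1 (hderiv w₀ s))
  rw [hasDerivAt_iff_tendsto_slope]
  refine hlim.congr fun w => ?_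
  simp only [slope_def_field, sub_self, mul_zero, intervalIntegral.integral_zero, sub_zero,
    ← intervalIntegral.integral_div, mul_div_assoc]

theorem hasDerivAt_integral_of_continuous (hH : Continuous (uncurry H))
    (hH' : Continuous (uncurry H')) (hderiv : ∀ w s, HasDerivAt (H · s) (H' w s) w)
    (a b w₀ : ℝ) :
    HasDerivAt (fun w => ∫ s in a..b, H w s) (∫ s in a..b, H' w₀ s) w₀ := by
  have h := (hasDerivAt_integral_mul_sub (G := fun _ _ => 1) continuous_const hH hH' hderiv
    a b w₀).add_const (∫ s in a..b, H w₀ s)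
  simp only [one_mul] at h
  refine h.congr_of_eventuallyEq (Eventually.of_forall fun w => ?_)
  have hHw : ∀ w, IntervalIntegrable (H w) MeasureTheory.volume a b := fun w =>
    (hH.comp (Continuous.prodMk_right w)).intervalIntegrable a b
  simp [intervalIntegral.integral_sub (hHw w) (hHw w₀)]

end ParametricDerivative

section Trajectories

variable {φ x x₁ x₂ v v₁ v₂ a₁ a₂ : ℝ → ℝ}

theorem energy_eq_initial {V : ℝ → ℝ} {k : ℝ} (hV : ∀ y, HasDerivAt V (2 * φ y) y)
    (hx : ∀ s, HasDerivAt x (v s) s) (hv : ∀ s, HasDerivAt v (-k * φ (x s)) s) (s : ℝ) :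
    v s ^ 2 + k * V (x s) = v 0 ^ 2 + k * V (x 0) := by
  have hE : ∀ s, HasDerivAt (fun s => v s ^ 2 + k * V (x s)) 0 s := fun s =>
    (((hv s).pow 2).add (((hV (x s)).comp s (hx s)).const_mul k)).congr_deriv (by ring)
  exact is_const_of_deriv_eq_zero (fun s => (hE s).differentiableAt) (fun s => (hE s).deriv) s 0

theorem integral_sq_sub_integral_sq (hx₁ : ∀ s, HasDerivAt x₁ (v₁ s) s)
    (hx₂ : ∀ s, HasDerivAt x₂ (v₂ s) s) (hv₁ : ∀ s, HasDerivAt v₁ (a₁ s) s)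
    (hv₂ : ∀ s, HasDerivAt v₂ (a₂ s) s) (ha₁ : Continuous a₁) (ha₂ : Continuous a₂)
    (h0 : x₁ 0 = x₂ 0) (t : ℝ) :
    (∫ s in 0..t, v₁ s ^ 2) - ∫ s in 0..t, v₂ s ^ 2 =
      (v₁ t + v₂ t) * (x₁ t - x₂ t) - ∫ s in 0..t, (a₁ s + a₂ s) * (x₁ s - x₂ s) := by
  have hv : ∀ {v a : ℝ → ℝ}, (∀ s, HasDerivAt v (a s) s) → Continuous v := fun hv =>
    continuous_iff_continuousAt.2 fun s => (hv s).continuousAt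
  have hparts := intervalIntegral.integral_mul_deriv_eq_deriv_mul (a := 0) (b := t)
    (fun s _ => (hv₁ s).add (hv₂ s)) (fun s _ => (hx₁ s).sub (hx₂ s))
    ((ha₁.add ha₂).intervalIntegrable 0 t) (((hv hv₁).sub (hv hv₂)).intervalIntegrable 0 t)
  simp only [Pi.add_apply, Pi.sub_apply, h0, sub_self, mul_zero, sub_zero] at hparts
  have hsq : ∀ {v a : ℝ → ℝ}, (∀ s, HasDerivAt v (a s) s) →
      IntervalIntegrable (fun s => v s ^ 2) MeasureTheory.volume 0 t := fun hv' =>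
    ((hv hv').pow 2).intervalIntegrable 0 t
  rw [← intervalIntegral.integral_sub (hsq hv₁) (hsq hv₂), ← hparts]
  congr 1 with s
  ring

end Trajectories

section ParametrizedFamily

variable {φ V : ℝ → ℝ} {ρ ρ' P : ℝ → ℝ → ℝ} {c : ℝ}

theorem continuous_velocity_in_param (hφ : Continuous φ) (hρc : Continuous (uncurry ρ))
    (hρ'' : ∀ w t, HasDerivAt (ρ' w) (-(w ^ 2) * φ (ρ w t)) t) (h1 : ∀ w, ρ' w 0 = c) (t : ℝ) :
    Continuous fun w => ρ' w t := by
  have hrepr : ∀ w, ρ' w t = c + ∫ s in 0..t, -(w ^ 2) * φ (ρ w s) := fun w => by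
    rw [intervalIntegral.integral_eq_sub_of_hasDerivAt (fun s _ => hρ'' w s)
      ((continuous_const.mul (hφ.comp (hρc.comp (Continuous.prodMk_right w)))).intervalIntegrable
        0 t), h1]
    ring
  simp only [hrepr]
  exact continuous_const.add (intervalIntegral.continuous_parametric_intervalIntegral_of_continuous'
    (by fun_prop) 0 t)

theorem hasDerivAt_integral_velocity_sq (hφ : Continuous φ) (hρc : Continuous (uncurry ρ))
    (hρ : ∀ w t, HasDerivAt (ρ w) (ρ' w t) t)
    (hρ'' : ∀ w t, HasDerivAt (ρ' w) (-(w ^ 2) * φ (ρ w t)) t)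
    (h0 : ∀ w, ρ w 0 = 0) (h1 : ∀ w, ρ' w 0 = c)
    (hP : ∀ w t, HasDerivAt (fun w' => ρ w' t) (P w t) w) (hPc : Continuous (uncurry P))
    (w₀ t : ℝ) :
    HasDerivAt (fun w => ∫ s in 0..t, ρ' w s ^ 2)
      (2 * (ρ' w₀ t * P w₀ t + w₀ ^ 2 * ∫ s in 0..t, φ (ρ w₀ s) * P w₀ s)) w₀ := by
  have hφρ : ∀ w, Continuous fun s => φ (ρ w s) := fun w =>
    hφ.comp (hρc.comp (Continuous.prodMk_right w))
  have hparts : ∀ w, ∫ s in 0..t, ρ' w s ^ 2 = (∫ s in 0..t, ρ' w₀ s ^ 2) +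
      (ρ' w t + ρ' w₀ t) * (ρ w t - ρ w₀ t) +
      ∫ s in 0..t, (w ^ 2 * φ (ρ w s) + w₀ ^ 2 * φ (ρ w₀ s)) * (ρ w s - ρ w₀ s) := fun w => by
    have h := integral_sq_sub_integral_sq (hρ w) (hρ w₀) (hρ'' w) (hρ'' w₀)
      (continuous_const.mul (hφρ w)) (continuous_const.mul (hφρ w₀)) ((h0 w).trans (h0 w₀).symm) t
    have hneg : ∫ s in 0..t, (-(w ^ 2) * φ (ρ w s) + -(w₀ ^ 2) * φ (ρ w₀ s)) * (ρ w s - ρ w₀ s) =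
        -∫ s in 0..t, (w ^ 2 * φ (ρ w s) + w₀ ^ 2 * φ (ρ w₀ s)) * (ρ w s - ρ w₀ s) := by
      rw [← intervalIntegral.integral_neg]
      congr 1 with s
      ring
    linear_combination h - hneg
  have hboundary := hasDerivAt_mul_sub_of_continuousAt (c := fun w => ρ' w t + ρ' w₀ t)
    ((continuous_velocity_in_param hφ hρc hρ'' h1 t).add continuous_const).continuousAt (hP w₀ t)
  have hbulk := hasDerivAt_integral_mul_sub
    (G := fun w s => w ^ 2 * φ (ρ w s) + w₀ ^ 2 * φ (ρ w₀ s)) (by fun_prop) hρc hPc hP 0 t w₀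
  refine ((hboundary.const_add _).add hbulk).congr_of_eventuallyEq
    (Eventually.of_forall hparts) |>.congr_deriv ?_
  have hbulk_deriv : ∫ s in 0..t, (w₀ ^ 2 * φ (ρ w₀ s) + w₀ ^ 2 * φ (ρ w₀ s)) * P w₀ s =
      2 * (w₀ ^ 2 * ∫ s in 0..t, φ (ρ w₀ s) * P w₀ s) := by
    rw [← intervalIntegral.integral_const_mul, ← intervalIntegral.integral_const_mul]
    congr 1 with s
    ring
  rw [hbulk_deriv]
  ring

theorem sq_mul_integral_potential_eq (hV : ∀ y, HasDerivAt V (2 * φ y) y) (hV0 : V 0 = 0)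
    (hρ : ∀ w t, HasDerivAt (ρ w) (ρ' w t) t)
    (hρ'' : ∀ w t, HasDerivAt (ρ' w) (-(w ^ 2) * φ (ρ w t)) t)
    (h0 : ∀ w, ρ w 0 = 0) (h1 : ∀ w, ρ' w 0 = c) (w t : ℝ) :
    w ^ 2 * ∫ s in 0..t, V (ρ w s) = c ^ 2 * t - ∫ s in 0..t, ρ' w s ^ 2 := by
  have henergy : ∀ s, w ^ 2 * V (ρ w s) = c ^ 2 - ρ' w s ^ 2 := fun s => by
    have h := energy_eq_initial hV (hρ w) (hρ'' w) s
    rw [h0, h1, hV0] at h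
    linarith
  have hρ'c : Continuous (ρ' w) := continuous_iff_continuousAt.2 fun s => (hρ'' w s).continuousAt
  rw [← intervalIntegral.integral_const_mul]
  simp only [henergy]
  rw [intervalIntegral.integral_sub (f := fun _ => c ^ 2) (g := fun s => ρ' w s ^ 2)
    intervalIntegrable_const ((hρ'c.pow 2).intervalIntegrable 0 t)]
  simp [mul_comm]

theorem hasDerivAt_mul_integral_potential (hV : ∀ y, HasDerivAt V (2 * φ y) y) (hV0 : V 0 = 0)
    (hφ : Continuous φ) (hρc : Continuous (uncurry ρ)) (hρ : ∀ w t, HasDerivAt (ρ w) (ρ' w t) t)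
    (hρ'' : ∀ w t, HasDerivAt (ρ' w) (-(w ^ 2) * φ (ρ w t)) t)
    (h0 : ∀ w, ρ w 0 = 0) (h1 : ∀ w, ρ' w 0 = c)
    (hP : ∀ w t, HasDerivAt (fun w' => ρ w' t) (P w t) w) (hPc : Continuous (uncurry P))
    {w₀ : ℝ} (hw₀ : w₀ ≠ 0) (t : ℝ) :
    HasDerivAt (fun w => w * ∫ s in 0..t, V (ρ w s)) (-(1 / w₀) * ρ' w₀ t * P w₀ t) w₀ := by
  have hQ := hasDerivAt_integral_velocity_sq hφ hρc hρ hρ'' h0 h1 hP hPc w₀ t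
  set L := ∫ s in 0..t, φ (ρ w₀ s) * P w₀ s
  have hVc : Continuous V := continuous_iff_continuousAt.2 fun y => (hV y).continuousAt
  have hA : HasDerivAt (fun w => ∫ s in 0..t, V (ρ w s)) (2 * L) w₀ := by
    rw [← intervalIntegral.integral_const_mul]
    exact hasDerivAt_integral_of_continuous (H := fun w s => V (ρ w s))
      (H' := fun w s => 2 * (φ (ρ w s) * P w s)) (hVc.comp hρc) (by fun_prop)
      (fun w s => ((hV (ρ w s)).comp w (hP w s)).congr_deriv (by ring)) 0 t w₀
  have hsq := (hQ.const_sub (c ^ 2 * t)).congr_of_eventuallyEq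
    (Eventually.of_forall (sq_mul_integral_potential_eq hV hV0 hρ hρ'' h0 h1 · t))
  have key := ((hasDerivAt_pow 2 w₀).mul hA).unique hsq
  refine ((hasDerivAt_id w₀).mul hA).congr_deriv ?_
  norm_num at key ⊢
  field_simp
  linear_combination key / 2

end ParametrizedFamily

theorem z_w0_factorization_general
    (f : ℝ → ℝ) (hf : MemF f)
    (g : ℝ → ℝ) (hg : g = oddExt f)
    (E : ℝ)
    (ρ ρ' : ℝ → ℝ → ℝ)
    (hρ : ∀ w t, HasDerivAt (ρ w) (ρ' w t) t)
    (hρ'' : ∀ w t, HasDerivAt (ρ' w) (-(w ^ 2) * g (ρ w t) * deriv g (ρ w t)) t)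
    (h0 : ∀ w, ρ w 0 = 0) (h1 : ∀ w, ρ' w 0 = Real.sqrt (2 * E))
    (P : ℝ → ℝ → ℝ)
    (hP : ∀ w t, HasDerivAt (fun w' => ρ w' t) (P w t) w)
    (hPc : Continuous (fun p : ℝ × ℝ => P p.1 p.2))
    (hρc : Continuous (fun p : ℝ × ℝ => ρ p.1 p.2))
    (w₀ : ℝ) (hw : 0 < w₀) (t : ℝ) :
    HasDerivAt (fun w => w * ∫ s in (0:ℝ)..t, g (ρ w s) ^ 2)
      (-(1 / w₀) * ρ' w₀ t * P w₀ t) w₀ := by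
  subst hg
  exact hasDerivAt_mul_integral_potential hf.hasDerivAt_oddExt_sq
    (by simp [oddExt_of_nonneg le_rfl, hf.zero]) hf.continuous_oddExt_mul_deriv hρc hρ
    (by simpa only [mul_assoc] using hρ'') h0 h1 hP hPc hw.ne' t

/-- factorization of the derivative of the vertical coordinate
`z(t;w₀) = w₀·∫₀ᵗ g(ρ(s;w₀))² ds` with respect to the parameter `w₀`:
`z_{w₀}(t;w₀) = −(1/w₀)·ρ̇(t;w₀)·ρ_{w₀}(t;w₀)`. -/
theorem z_w0_factorization
    (f : ℝ → ℝ) (hf : MemF f)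
    (g : ℝ → ℝ) (hg : g = oddExt f)
    (E : ℝ) (hE : 0 < E)
    (ρ ρ' : ℝ → ℝ → ℝ)
    (hρ : ∀ w t, HasDerivAt (ρ w) (ρ' w t) t)
    (hρ'' : ∀ w t, HasDerivAt (ρ' w) (-(w ^ 2) * g (ρ w t) * deriv g (ρ w t)) t)
    (h0 : ∀ w, ρ w 0 = 0) (h1 : ∀ w, ρ' w 0 = Real.sqrt (2 * E))
    (P : ℝ → ℝ → ℝ)
    (hP : ∀ w t, HasDerivAt (fun w' => ρ w' t) (P w t) w)
    (hPc : Continuous (fun p : ℝ × ℝ => P p.1 p.2))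
    (hρc : Continuous (fun p : ℝ × ℝ => ρ p.1 p.2))
    (w₀ : ℝ) (hw : 0 < w₀) (t : ℝ) :
    HasDerivAt (fun w => w * ∫ s in (0:ℝ)..t, g (ρ w s) ^ 2)
      (-(1 / w₀) * ρ' w₀ t * P w₀ t) w₀ :=
  z_w0_factorization_general f hf g hg E ρ ρ' hρ hρ'' h0 h1 P hP hPc hρc w₀ hw t
end
end

section
/- The Carnot–Carathéodory distance d_CC(q,q') = inf{ℓ(γ) : γ admissible, γ(0)=q, γ(T)=q'} is a well-defined metric on ℝ³ which induces the Euclidean topology, and the metric space (ℝ³, d_CC) is complete. -/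
noncomputable section

/-- Euclidean norm of a control value. -/
def ctrlNorm (u : ℝ × ℝ × ℝ) : ℝ := Real.sqrt (u.1 ^ 2 + u.2.1 ^ 2 + u.2.2 ^ 2)

/-- An admissible curve `γ` on `[0,T]` together with an `L²` control `u`
for the Carnot–Carathéodory structure generated by `∂x, ∂y, f(r)∂z`. -/
structure IsAdmissiblePair (f : ℝ → ℝ) (T : ℝ) (γ u : ℝ → ℝ × ℝ × ℝ) : Prop where
  hT : 0 ≤ T
  meas : MeasureTheory.AEStronglyMeasurable u (MeasureTheory.volume.restrict (Set.Icc 0 T))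
  sqInt : MeasureTheory.IntegrableOn (fun t => ctrlNorm (u t) ^ 2) (Set.Icc 0 T)
  hx : ∀ t ∈ Set.Icc 0 T, (γ t).1 = (γ 0).1 + ∫ s in (0:ℝ)..t, (u s).1
  hy : ∀ t ∈ Set.Icc 0 T, (γ t).2.1 = (γ 0).2.1 + ∫ s in (0:ℝ)..t, (u s).2.1
  hz : ∀ t ∈ Set.Icc 0 T, (γ t).2.2 = (γ 0).2.2 + ∫ s in (0:ℝ)..t, (u s).2.2 * f (rad (γ s))

/-- Length of an admissible pair. -/
def pairLength (T : ℝ) (u : ℝ → ℝ × ℝ × ℝ) : ℝ := ∫ t in (0:ℝ)..T, ctrlNorm (u t)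

/-- The Carnot–Carathéodory distance. -/
def dCC (f : ℝ → ℝ) (q q' : ℝ × ℝ × ℝ) : ℝ :=
  sInf {L : ℝ | ∃ T γ u, IsAdmissiblePair f T γ u ∧ γ 0 = q ∧ γ T = q' ∧ L = pairLength T u}

/-!
Admissible curves can be reversed and concatenated, which gives symmetry and the triangle
inequality. Along a curve of length `L` starting at `q` the horizontal displacement is at most `L`,
so the radius stays below `rad q + 2L` and the vertical displacement is at most
`f (rad q + 2L) * L`: a small `d_CC` forces a small Euclidean distance, uniformly on bounded
radii. Conversely `q'` is reached from `q` by a horizontal segment, a sideways step of size `ρ`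
out to radius at least `ρ`, a vertical segment of cost `|Δz| / f ρ` and the step back, so
`d_CC ≤ |Δx| + |Δy| + 2ρ + |Δz| / f ρ`. A `d_CC`-Cauchy sequence thus has bounded radius, is
Euclidean Cauchy, and its Euclidean limit is its `d_CC` limit.
-/

open MeasureTheory Set Filter

lemma ctrlNorm_nonneg (u : ℝ × ℝ × ℝ) : 0 ≤ ctrlNorm u := Real.sqrt_nonneg _

lemma ctrlNorm_neg (u : ℝ × ℝ × ℝ) : ctrlNorm (-u) = ctrlNorm u := by
  simp [ctrlNorm]

lemma continuous_ctrlNorm : Continuous ctrlNorm := by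
  unfold ctrlNorm; fun_prop

lemma abs_fst_le_ctrlNorm (u : ℝ × ℝ × ℝ) : |u.1| ≤ ctrlNorm u :=
  Real.abs_le_sqrt (by nlinarith [sq_nonneg u.2.1, sq_nonneg u.2.2])

lemma abs_snd_fst_le_ctrlNorm (u : ℝ × ℝ × ℝ) : |u.2.1| ≤ ctrlNorm u :=
  Real.abs_le_sqrt (by nlinarith [sq_nonneg u.1, sq_nonneg u.2.2])

lemma abs_snd_snd_le_ctrlNorm (u : ℝ × ℝ × ℝ) : |u.2.2| ≤ ctrlNorm u :=
  Real.abs_le_sqrt (by nlinarith [sq_nonneg u.1, sq_nonneg u.2.1])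

lemma rad_nonneg (q : ℝ × ℝ × ℝ) : 0 ≤ rad q := Real.sqrt_nonneg _

lemma rad_eq_norm (q : ℝ × ℝ × ℝ) : rad q = ‖(q.1 : ℂ) + q.2.1 * Complex.I‖ :=
  (Complex.norm_add_mul_I _ _).symm

lemma sqrt_sq_add_sq_le (a b : ℝ) : √(a ^ 2 + b ^ 2) ≤ |a| + |b| := by
  simpa [Complex.norm_add_mul_I] using Complex.norm_le_abs_re_add_abs_im (a + b * Complex.I)

lemma rad_le_rad_add (p q : ℝ × ℝ × ℝ) : rad p ≤ rad q + (|p.1 - q.1| + |p.2.1 - q.2.1|) := by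
  rw [rad_eq_norm, rad_eq_norm]
  refine (norm_le_norm_add_norm_sub' _ _).trans (add_le_add_right ?_ _)
  simpa [sub_mul, add_sub_add_comm] using
    Complex.norm_le_abs_re_add_abs_im ((p.1 - q.1 : ℝ) + (p.2.1 - q.2.1 : ℝ) * Complex.I)

lemma le_rad_of_le_abs {q : ℝ × ℝ × ℝ} {ρ : ℝ} (h : ρ ≤ |q.1|) : ρ ≤ rad q :=
  h.trans (Real.abs_le_sqrt (le_add_of_nonneg_right (sq_nonneg _)))

lemma MemF.nonneg_s9 {f : ℝ → ℝ} (hf : MemF f) {r : ℝ} (hr : 0 ≤ r) : 0 ≤ f r := by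
  rcases hr.eq_or_lt with rfl | h
  · exact hf.zero.ge
  · exact (hf.pos r h).le

lemma MemF.monotoneOn {f : ℝ → ℝ} (hf : MemF f) : MonotoneOn f (Ici 0) :=
  hf.strictMono.monotoneOn

lemma intervalIntegrable_of_integrableOn_Icc {g : ℝ → ℝ} {a b c d : ℝ}
    (h : IntegrableOn g (Icc a b)) (hc : c ∈ Icc a b) (hd : d ∈ Icc a b) :
    IntervalIntegrable g volume c d :=
  (h.mono_set (uIcc_subset_Icc hc hd)).intervalIntegrable

lemma measurePreserving_const_sub_restrict_Icc (T : ℝ) :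
    MeasurePreserving (fun x : ℝ => T - x) (volume.restrict (Icc 0 T))
      (volume.restrict (Icc 0 T)) := by
  have h := (Measure.measurePreserving_sub_left volume T).restrict_preimage
    (measurableSet_Icc (a := (0 : ℝ)) (b := T))
  rwa [preimage_const_sub_Icc, sub_self, sub_zero] at h

lemma eq_add_integral_reverse {φ g : ℝ → ℝ} {T : ℝ} (hT : 0 ≤ T) (hg : IntegrableOn g (Icc 0 T))
    (hφ : ∀ t ∈ Icc 0 T, φ t = φ 0 + ∫ s in (0 : ℝ)..t, g s) {t : ℝ} (ht : t ∈ Icc 0 T) :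
    φ (T - t) = φ T + ∫ s in (0 : ℝ)..t, -g (T - s) := by
  have ht' : T - t ∈ Icc 0 T := ⟨by linarith [ht.2], by linarith [ht.1]⟩
  have hsplit := intervalIntegral.integral_add_adjacent_intervals
    (intervalIntegrable_of_integrableOn_Icc hg (left_mem_Icc.2 hT) ht')
    (intervalIntegrable_of_integrableOn_Icc hg ht' (right_mem_Icc.2 hT))
  rw [intervalIntegral.integral_neg, intervalIntegral.integral_comp_sub_left g T, sub_zero,
    hφ _ ht', hφ T (right_mem_Icc.2 hT)]
  linarith

def glueAt {α : Type*} (T : ℝ) (a b : ℝ → α) (t : ℝ) : α := if t ≤ T then a t else b (t - T)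

section Glue

variable {α β : Type*} {T T' t : ℝ} {a b : ℝ → α}

lemma glueAt_of_le (h : t ≤ T) : glueAt T a b t = a t := if_pos h

lemma glueAt_of_lt (h : T < t) : glueAt T a b t = b (t - T) := if_neg (not_le.2 h)

lemma apply_glueAt (g : α → β) :
    g (glueAt T a b t) = glueAt T (fun s => g (a s)) (fun s => g (b s)) t :=
  apply_ite g _ _ _

lemma glueAt_add (hT' : 0 ≤ T') (h : a T = b 0) : glueAt T a b (T + T') = b T' := by
  rcases hT'.eq_or_lt with rfl | hT'
  · rw [add_zero, glueAt_of_le le_rfl, h]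
  · rw [glueAt_of_lt (lt_add_of_pos_right T hT'), add_sub_cancel_left]

lemma restrict_Icc_eq_add (hT : 0 ≤ T) (hT' : 0 ≤ T') :
    volume.restrict (Icc 0 (T + T')) =
      volume.restrict (Icc 0 T) + volume.restrict (Ioc T (T + T')) := by
  rw [← Measure.restrict_union ((Iic_disjoint_Ioc le_rfl).mono_left Icc_subset_Iic_self)
      measurableSet_Ioc,
    Icc_union_Ioc_eq_Icc hT (le_add_of_nonneg_right hT')]

lemma measurePreserving_sub_restrict_Ioc (T T' : ℝ) :
    MeasurePreserving (fun x : ℝ => x - T) (volume.restrict (Ioc T (T + T')))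
      (volume.restrict (Ioc 0 T')) := by
  have h := (measurePreserving_sub_right volume T).restrict_preimage
    (measurableSet_Ioc (a := (0 : ℝ)) (b := T'))
  rwa [preimage_sub_const_Ioc, zero_add, add_comm T'] at h

lemma aestronglyMeasurable_glueAt [TopologicalSpace α] [TopologicalSpace.PseudoMetrizableSpace α]
    (hT : 0 ≤ T) (hT' : 0 ≤ T') (ha : AEStronglyMeasurable a (volume.restrict (Icc 0 T)))
    (hb : AEStronglyMeasurable b (volume.restrict (Icc 0 T'))) :
    AEStronglyMeasurable (glueAt T a b) (volume.restrict (Icc 0 (T + T'))) := by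
  rw [restrict_Icc_eq_add hT hT', aestronglyMeasurable_add_measure_iff]
  refine ⟨ha.congr ?_, ((hb.mono_set Ioc_subset_Icc_self).comp_measurePreserving
    (measurePreserving_sub_restrict_Ioc T T')).congr ?_⟩
  · filter_upwards [ae_restrict_mem measurableSet_Icc] with s hs using (glueAt_of_le hs.2).symm
  · filter_upwards [ae_restrict_mem measurableSet_Ioc] with s hs using (glueAt_of_lt hs.1).symm

lemma integrableOn_glueAt {g h : ℝ → ℝ} (hT : 0 ≤ T) (hT' : 0 ≤ T')
    (hg : IntegrableOn g (Icc 0 T)) (hh : IntegrableOn h (Icc 0 T')) :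
    IntegrableOn (glueAt T g h) (Icc 0 (T + T')) := by
  rw [IntegrableOn, restrict_Icc_eq_add hT hT', integrable_add_measure]
  refine ⟨hg.congr ?_, (((measurePreserving_sub_restrict_Ioc T T').integrable_comp
    (hh.mono_set Ioc_subset_Icc_self).aestronglyMeasurable).2
      (hh.mono_set Ioc_subset_Icc_self)).congr ?_⟩
  · filter_upwards [ae_restrict_mem measurableSet_Icc] with s hs using (glueAt_of_le hs.2).symm
  · filter_upwards [ae_restrict_mem measurableSet_Ioc] with s hs using (glueAt_of_lt hs.1).symm

lemma integral_glueAt {g h : ℝ → ℝ} (hT : 0 ≤ T) (hT' : 0 ≤ T')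
    (hg : IntegrableOn g (Icc 0 T)) (hh : IntegrableOn h (Icc 0 T')) (ht : t ∈ Icc T (T + T')) :
    ∫ s in (0 : ℝ)..t, glueAt T g h s =
      (∫ s in (0 : ℝ)..T, g s) + ∫ s in (0 : ℝ)..(t - T), h s := by
  have hint := integrableOn_glueAt hT hT' hg hh
  have hTmem : T ∈ Icc 0 (T + T') := ⟨hT, ht.1.trans ht.2⟩
  rw [← intervalIntegral.integral_add_adjacent_intervals
    (intervalIntegrable_of_integrableOn_Icc hint (left_mem_Icc.2 (hTmem.1.trans hTmem.2)) hTmem)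
    (intervalIntegrable_of_integrableOn_Icc hint hTmem ⟨hT.trans ht.1, ht.2⟩)]
  congr 1
  · refine intervalIntegral.integral_congr fun s hs => glueAt_of_le ?_
    exact (uIcc_of_le hT ▸ hs).2
  · rw [← sub_self T, ← intervalIntegral.integral_comp_sub_right]
    refine intervalIntegral.integral_congr_ae (Eventually.of_forall fun s hs => glueAt_of_lt ?_)
    exact (uIoc_of_le ht.1 ▸ hs).1

lemma eq_add_integral_glueAt {φ ψ g h : ℝ → ℝ} (hT : 0 ≤ T) (hT' : 0 ≤ T')
    (hg : IntegrableOn g (Icc 0 T)) (hh : IntegrableOn h (Icc 0 T'))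
    (hφ : ∀ t ∈ Icc 0 T, φ t = φ 0 + ∫ s in (0 : ℝ)..t, g s)
    (hψ : ∀ t ∈ Icc 0 T', ψ t = ψ 0 + ∫ s in (0 : ℝ)..t, h s) (hφψ : φ T = ψ 0)
    (ht : t ∈ Icc 0 (T + T')) :
    glueAt T φ ψ t = glueAt T φ ψ 0 + ∫ s in (0 : ℝ)..t, glueAt T g h s := by
  rw [glueAt_of_le (t := 0) hT]
  rcases le_or_gt t T with htT | htT
  · rw [glueAt_of_le htT, hφ t ⟨ht.1, htT⟩]
    congr 1
    refine intervalIntegral.integral_congr fun s hs => (glueAt_of_le ?_).symm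
    exact (uIcc_of_le ht.1 ▸ hs).2.trans htT
  · rw [glueAt_of_lt htT, integral_glueAt hT hT' hg hh ⟨htT.le, ht.2⟩,
      hψ _ ⟨sub_nonneg.2 htT.le, by linarith [ht.2]⟩, ← hφψ, hφ T (right_mem_Icc.2 hT), add_assoc]

end Glue

namespace IsAdmissiblePair

variable {f : ℝ → ℝ} {T : ℝ} {γ u : ℝ → ℝ × ℝ × ℝ}

lemma pairLength_nonneg (P : IsAdmissiblePair f T γ u) : 0 ≤ pairLength T u :=
  intervalIntegral.integral_nonneg P.hT fun _ _ => ctrlNorm_nonneg _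

lemma integrableOn_ctrlNorm (P : IsAdmissiblePair f T γ u) :
    IntegrableOn (fun t => ctrlNorm (u t)) (Icc 0 T) := by
  have hdom : IntegrableOn (fun t => 1 + ctrlNorm (u t) ^ 2) (Icc 0 T) :=
    (integrableOn_const measure_Icc_lt_top.ne enorm_ne_top).add P.sqInt
  refine hdom.mono' (continuous_ctrlNorm.comp_aestronglyMeasurable P.meas) ?_
  filter_upwards with t
  rw [Real.norm_eq_abs, abs_of_nonneg (ctrlNorm_nonneg _)]
  nlinarith [ctrlNorm_nonneg (u t)]

lemma integrableOn_comp (P : IsAdmissiblePair f T γ u) {g : ℝ × ℝ × ℝ → ℝ}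
    (hg : Continuous g) (hle : ∀ v, |g v| ≤ ctrlNorm v) :
    IntegrableOn (fun t => g (u t)) (Icc 0 T) :=
  P.integrableOn_ctrlNorm.mono' (hg.comp_aestronglyMeasurable P.meas)
    (Eventually.of_forall fun t => hle (u t))

lemma integrableOn_fst (P : IsAdmissiblePair f T γ u) :
    IntegrableOn (fun t => (u t).1) (Icc 0 T) :=
  P.integrableOn_comp continuous_fst abs_fst_le_ctrlNorm

lemma integrableOn_snd_fst (P : IsAdmissiblePair f T γ u) :
    IntegrableOn (fun t => (u t).2.1) (Icc 0 T) :=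
  P.integrableOn_comp (continuous_fst.comp continuous_snd) abs_snd_fst_le_ctrlNorm

lemma integrableOn_snd_snd (P : IsAdmissiblePair f T γ u) :
    IntegrableOn (fun t => (u t).2.2) (Icc 0 T) :=
  P.integrableOn_comp (continuous_snd.comp continuous_snd) abs_snd_snd_le_ctrlNorm

lemma abs_integral_comp_le (P : IsAdmissiblePair f T γ u) {g : ℝ × ℝ × ℝ → ℝ}
    (hg : Continuous g) (hle : ∀ v, |g v| ≤ ctrlNorm v) {t : ℝ} (ht : t ∈ Icc 0 T) :
    |∫ s in (0 : ℝ)..t, g (u s)| ≤ pairLength T u := by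
  have h0 : (0 : ℝ) ∈ Icc 0 T := left_mem_Icc.2 P.hT
  calc |∫ s in (0 : ℝ)..t, g (u s)| ≤ ∫ s in (0 : ℝ)..t, |g (u s)| :=
        intervalIntegral.abs_integral_le_integral_abs ht.1
    _ ≤ ∫ s in (0 : ℝ)..t, ctrlNorm (u s) :=
        intervalIntegral.integral_mono_on ht.1
          (intervalIntegrable_of_integrableOn_Icc (P.integrableOn_comp hg hle) h0 ht).abs
          (intervalIntegrable_of_integrableOn_Icc P.integrableOn_ctrlNorm h0 ht)
          fun s _ => hle (u s)
    _ ≤ pairLength T u :=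
        intervalIntegral.integral_mono_interval le_rfl ht.1 ht.2
          (Eventually.of_forall fun s => ctrlNorm_nonneg (u s))
          (intervalIntegrable_of_integrableOn_Icc P.integrableOn_ctrlNorm h0 (right_mem_Icc.2 P.hT))

lemma abs_fst_sub_le (P : IsAdmissiblePair f T γ u) {t : ℝ} (ht : t ∈ Icc 0 T) :
    |(γ t).1 - (γ 0).1| ≤ pairLength T u := by
  rw [P.hx t ht, add_sub_cancel_left]
  exact P.abs_integral_comp_le continuous_fst abs_fst_le_ctrlNorm ht

lemma abs_snd_fst_sub_le (P : IsAdmissiblePair f T γ u) {t : ℝ} (ht : t ∈ Icc 0 T) :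
    |(γ t).2.1 - (γ 0).2.1| ≤ pairLength T u := by
  rw [P.hy t ht, add_sub_cancel_left]
  exact P.abs_integral_comp_le (continuous_fst.comp continuous_snd) abs_snd_fst_le_ctrlNorm ht

lemma rad_le (P : IsAdmissiblePair f T γ u) {t : ℝ} (ht : t ∈ Icc 0 T) :
    rad (γ t) ≤ rad (γ 0) + 2 * pairLength T u := by
  linarith [rad_le_rad_add (γ t) (γ 0), P.abs_fst_sub_le ht, P.abs_snd_fst_sub_le ht]

lemma continuousOn_rad (P : IsAdmissiblePair f T γ u) :
    ContinuousOn (fun t => rad (γ t)) (Icc 0 T) := by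
  have hprim : ∀ {g : ℝ → ℝ}, IntegrableOn g (Icc 0 T) →
      ContinuousOn (fun t => ∫ s in (0 : ℝ)..t, g s) (Icc 0 T) := fun hg => by
    rw [← uIcc_of_le P.hT] at hg ⊢
    exact intervalIntegral.continuousOn_primitive_interval hg
  have hx := (continuousOn_const (c := (γ 0).1)).add (hprim P.integrableOn_fst)
  have hy := (continuousOn_const (c := (γ 0).2.1)).add (hprim P.integrableOn_snd_fst)
  refine (Real.continuous_sqrt.comp_continuousOn ((hx.pow 2).add (hy.pow 2))).congr fun t ht => ?_
  simp only [Function.comp, Pi.add_apply, Pi.pow_apply, rad, P.hx t ht, P.hy t ht]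

lemma integrableOn_vertical (hf : ContinuousOn f (Ici 0)) (P : IsAdmissiblePair f T γ u) :
    IntegrableOn (fun s => (u s).2.2 * f (rad (γ s))) (Icc 0 T) :=
  P.integrableOn_snd_snd.mul_continuousOn
    (hf.comp P.continuousOn_rad fun t _ => rad_nonneg (γ t)) isCompact_Icc

lemma abs_snd_snd_sub_le (hf : MemF f) (P : IsAdmissiblePair f T γ u) :
    |(γ T).2.2 - (γ 0).2.2| ≤ f (rad (γ 0) + 2 * pairLength T u) * pairLength T u := by
  set R := rad (γ 0) + 2 * pairLength T u
  have hR : 0 ≤ R := add_nonneg (rad_nonneg _) (mul_nonneg zero_le_two P.pairLength_nonneg)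
  have h0 : (0 : ℝ) ∈ Icc 0 T := left_mem_Icc.2 P.hT
  have hT : T ∈ Icc 0 T := right_mem_Icc.2 P.hT
  have hweight : ∀ s ∈ Icc 0 T, |(u s).2.2 * f (rad (γ s))| ≤ f R * ctrlNorm (u s) :=
    fun s hs => by
      rw [abs_mul, abs_of_nonneg (hf.nonneg_s9 (rad_nonneg _)), mul_comm]
      exact mul_le_mul (hf.monotoneOn (rad_nonneg _) hR (P.rad_le hs))
        (abs_snd_snd_le_ctrlNorm _) (abs_nonneg _) (hf.nonneg_s9 hR)
  rw [P.hz T hT, add_sub_cancel_left]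
  calc _ ≤ ∫ s in (0 : ℝ)..T, |(u s).2.2 * f (rad (γ s))| :=
        intervalIntegral.abs_integral_le_integral_abs P.hT
    _ ≤ ∫ s in (0 : ℝ)..T, f R * ctrlNorm (u s) :=
        intervalIntegral.integral_mono_on P.hT
          (intervalIntegrable_of_integrableOn_Icc (P.integrableOn_vertical hf.cont) h0 hT).abs
          ((intervalIntegrable_of_integrableOn_Icc P.integrableOn_ctrlNorm h0 hT).const_mul _)
          hweight
    _ = f R * pairLength T u := intervalIntegral.integral_const_mul _ _

lemma norm_sub_le_pairLength (hf : MemF f) (P : IsAdmissiblePair f T γ u) :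
    ‖γ T - γ 0‖ ≤ (1 + f (rad (γ 0) + 2 * pairLength T u)) * pairLength T u := by
  have hT : T ∈ Icc 0 T := right_mem_Icc.2 P.hT
  have hfR := hf.nonneg_s9 (add_nonneg (rad_nonneg (γ 0)) (mul_nonneg zero_le_two P.pairLength_nonneg))
  have hL := P.pairLength_nonneg
  refine norm_prod_le_iff.2 ⟨?_, norm_prod_le_iff.2 ⟨?_, ?_⟩⟩ <;>
    simp only [Prod.fst_sub, Prod.snd_sub, Real.norm_eq_abs]
  · nlinarith [P.abs_fst_sub_le hT]
  · nlinarith [P.abs_snd_fst_sub_le hT]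
  · nlinarith [P.abs_snd_snd_sub_le hf]

lemma reverse (hf : ContinuousOn f (Ici 0)) (P : IsAdmissiblePair f T γ u) :
    IsAdmissiblePair f T (fun t => γ (T - t)) (fun t => -u (T - t)) := by
  have hrefl := measurePreserving_const_sub_restrict_Icc T
  refine ⟨P.hT, (P.meas.comp_measurePreserving hrefl).neg, ?_, fun t ht => ?_, fun t ht => ?_,
    fun t ht => ?_⟩
  · simpa [IntegrableOn, Function.comp_def, ctrlNorm_neg] using
      (hrefl.integrable_comp P.sqInt.aestronglyMeasurable).2 P.sqInt
  · simpa using eq_add_integral_reverse P.hT P.integrableOn_fst P.hx ht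
  · simpa using eq_add_integral_reverse P.hT P.integrableOn_snd_fst P.hy ht
  · simpa [neg_mul] using eq_add_integral_reverse P.hT (P.integrableOn_vertical hf) P.hz ht

lemma pairLength_reverse (u : ℝ → ℝ × ℝ × ℝ) (T : ℝ) :
    pairLength T (fun t => -u (T - t)) = pairLength T u := by
  simp only [pairLength, ctrlNorm_neg]
  rw [intervalIntegral.integral_comp_sub_left (fun t => ctrlNorm (u t)) T, sub_self, sub_zero]

section Glue

variable {T' : ℝ} {γ' u' : ℝ → ℝ × ℝ × ℝ}

lemma glue (hf : ContinuousOn f (Ici 0)) (P : IsAdmissiblePair f T γ u)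
    (Q : IsAdmissiblePair f T' γ' u') (hγ : γ T = γ' 0) :
    IsAdmissiblePair f (T + T') (glueAt T γ γ') (glueAt T u u') := by
  have hvert : ∀ s, (glueAt T u u' s).2.2 * f (rad (glueAt T γ γ' s)) =
      glueAt T (fun s => (u s).2.2 * f (rad (γ s)))
        (fun s => (u' s).2.2 * f (rad (γ' s))) s := fun s => by
    unfold glueAt; split_ifs <;> rfl
  refine ⟨add_nonneg P.hT Q.hT, aestronglyMeasurable_glueAt P.hT Q.hT P.meas Q.meas, ?_,
    fun t ht => ?_, fun t ht => ?_, fun t ht => ?_⟩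
  · simpa only [apply_glueAt fun v => ctrlNorm v ^ 2] using
      integrableOn_glueAt P.hT Q.hT P.sqInt Q.sqInt
  · simpa only [apply_glueAt Prod.fst] using eq_add_integral_glueAt P.hT Q.hT P.integrableOn_fst
      Q.integrableOn_fst P.hx Q.hx (congrArg Prod.fst hγ) ht
  · simpa only [apply_glueAt Prod.fst, apply_glueAt Prod.snd] using eq_add_integral_glueAt P.hT Q.hT
      P.integrableOn_snd_fst Q.integrableOn_snd_fst P.hy Q.hy (congrArg (·.2.1) hγ) ht
  · have h := eq_add_integral_glueAt P.hT Q.hT (P.integrableOn_vertical hf)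
      (Q.integrableOn_vertical hf) P.hz Q.hz (congrArg (·.2.2) hγ) ht
    simp only [← hvert] at h
    simpa only [apply_glueAt Prod.snd, apply_glueAt Prod.fst] using h

lemma pairLength_glue (P : IsAdmissiblePair f T γ u) (Q : IsAdmissiblePair f T' γ' u') :
    pairLength (T + T') (glueAt T u u') = pairLength T u + pairLength T' u' := by
  simp only [pairLength, apply_glueAt ctrlNorm]
  rw [integral_glueAt P.hT Q.hT P.integrableOn_ctrlNorm Q.integrableOn_ctrlNorm
    ⟨le_add_of_nonneg_right Q.hT, le_rfl⟩, add_sub_cancel_left]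

end Glue

end IsAdmissiblePair

def lengthSet (f : ℝ → ℝ) (q q' : ℝ × ℝ × ℝ) : Set ℝ :=
  {L : ℝ | ∃ T γ u, IsAdmissiblePair f T γ u ∧ γ 0 = q ∧ γ T = q' ∧ L = pairLength T u}

section LengthSet

variable {f : ℝ → ℝ} {q q' q'' : ℝ × ℝ × ℝ} {L L' : ℝ}

lemma dCC_eq_sInf (f : ℝ → ℝ) (q q' : ℝ × ℝ × ℝ) : dCC f q q' = sInf (lengthSet f q q') := rfl

lemma nonneg_of_mem_lengthSet (h : L ∈ lengthSet f q q') : 0 ≤ L := by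
  obtain ⟨T, γ, u, P, -, -, rfl⟩ := h
  exact P.pairLength_nonneg

lemma dCC_nonneg (f : ℝ → ℝ) (q q' : ℝ × ℝ × ℝ) : 0 ≤ dCC f q q' :=
  Real.sInf_nonneg fun _ => nonneg_of_mem_lengthSet

lemma dCC_le_of_mem_lengthSet (h : L ∈ lengthSet f q q') : dCC f q q' ≤ L :=
  csInf_le ⟨0, fun _ => nonneg_of_mem_lengthSet⟩ h

lemma zero_mem_lengthSet_self (f : ℝ → ℝ) (q : ℝ × ℝ × ℝ) : 0 ∈ lengthSet f q q := by
  refine ⟨0, fun _ => q, fun _ => 0, ⟨le_rfl, aestronglyMeasurable_const, ?_, ?_, ?_, ?_⟩,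
    rfl, rfl, ?_⟩ <;> simp [ctrlNorm, pairLength]

lemma dCC_self (f : ℝ → ℝ) (q : ℝ × ℝ × ℝ) : dCC f q q = 0 :=
  (dCC_le_of_mem_lengthSet (zero_mem_lengthSet_self f q)).antisymm (dCC_nonneg f q q)

lemma mem_lengthSet_comm (hf : ContinuousOn f (Ici 0)) (h : L ∈ lengthSet f q q') :
    L ∈ lengthSet f q' q := by
  obtain ⟨T, γ, u, P, rfl, rfl, rfl⟩ := h
  exact ⟨T, _, _, P.reverse hf, by simp, by simp, (IsAdmissiblePair.pairLength_reverse u T).symm⟩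

lemma add_mem_lengthSet (hf : ContinuousOn f (Ici 0)) (h : L ∈ lengthSet f q q')
    (h' : L' ∈ lengthSet f q' q'') : L + L' ∈ lengthSet f q q'' := by
  obtain ⟨T, γ, u, P, rfl, hγ, rfl⟩ := h
  obtain ⟨T', γ', u', Q, hγ', rfl, rfl⟩ := h'
  exact ⟨T + T', _, _, P.glue hf Q (hγ.trans hγ'.symm), glueAt_of_le P.hT,
    glueAt_add Q.hT (hγ.trans hγ'.symm), (P.pairLength_glue Q).symm⟩

lemma horizontal_mem_lengthSet (h : q'.2.2 = q.2.2) :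
    √((q'.1 - q.1) ^ 2 + (q'.2.1 - q.2.1) ^ 2) ∈ lengthSet f q q' := by
  refine ⟨1, fun t => (q.1 + t * (q'.1 - q.1), q.2.1 + t * (q'.2.1 - q.2.1), q.2.2),
    fun _ => (q'.1 - q.1, q'.2.1 - q.2.1, 0), ⟨zero_le_one, aestronglyMeasurable_const,
      integrableOn_const measure_Icc_lt_top.ne enorm_ne_top, ?_, ?_, ?_⟩, by simp, ?_, ?_⟩
  · intro t _; simp [mul_comm, mul_sub]
  · intro t _; simp [mul_comm, mul_sub]
  · intro t _; simp
  · ext <;> simp [h]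
  · simp [pairLength, ctrlNorm]

lemma vertical_mem_lengthSet (h₁ : q'.1 = q.1) (h₂ : q'.2.1 = q.2.1) (hq : 0 < f (rad q)) :
    |q'.2.2 - q.2.2| / f (rad q) ∈ lengthSet f q q' := by
  refine ⟨1, fun t => (q.1, q.2.1, q.2.2 + t * (q'.2.2 - q.2.2)),
    fun _ => (0, 0, (q'.2.2 - q.2.2) / f (rad q)), ⟨zero_le_one, aestronglyMeasurable_const,
      integrableOn_const measure_Icc_lt_top.ne enorm_ne_top, ?_, ?_, ?_⟩, by simp, ?_, ?_⟩
  · intro t _; simp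
  · intro t _; simp
  · intro t _
    have hrad : ∀ s : ℝ, rad (q.1, q.2.1, q.2.2 + s * (q'.2.2 - q.2.2)) = rad q := fun _ => rfl
    simp only [hrad, intervalIntegral.integral_const, sub_zero, smul_eq_mul, zero_mul, add_zero]
    field_simp
  · ext <;> simp [h₁, h₂]
  · simp [pairLength, ctrlNorm, Real.sqrt_sq_eq_abs, abs_div, abs_of_pos hq]

end LengthSet

lemma exists_abs_eq_le_abs_add (x : ℝ) {ρ : ℝ} (hρ : 0 ≤ ρ) : ∃ e, |e| = ρ ∧ ρ ≤ |x + e| := by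
  rcases le_total 0 x with hx | hx
  · exact ⟨ρ, abs_of_nonneg hρ, by rw [abs_of_nonneg (by linarith)]; linarith⟩
  · exact ⟨-ρ, by rw [abs_neg, abs_of_nonneg hρ], by rw [abs_of_nonpos (by linarith)]; linarith⟩

section MemF

variable {f : ℝ → ℝ}

lemma exists_mem_lengthSet_le (hf : MemF f) (q q' : ℝ × ℝ × ℝ) {ρ : ℝ} (hρ : 0 < ρ) :
    ∃ L ∈ lengthSet f q q',
      L ≤ |q'.1 - q.1| + |q'.2.1 - q.2.1| + 2 * ρ + |q'.2.2 - q.2.2| / f ρ := by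
  obtain ⟨e, he, hρe⟩ := exists_abs_eq_le_abs_add q'.1 hρ.le
  let p₁ : ℝ × ℝ × ℝ := (q'.1, q'.2.1, q.2.2)
  let p₂ : ℝ × ℝ × ℝ := (q'.1 + e, q'.2.1, q.2.2)
  let p₃ : ℝ × ℝ × ℝ := (q'.1 + e, q'.2.1, q'.2.2)
  have hfρ : 0 < f ρ := hf.pos ρ hρ
  have hf₂ : f ρ ≤ f (rad p₂) := hf.monotoneOn hρ.le (rad_nonneg _) (le_rad_of_le_abs hρe)
  have m₁ := horizontal_mem_lengthSet (f := f) (q := q) (q' := p₁) rfl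
  have m₂ := horizontal_mem_lengthSet (f := f) (q := p₁) (q' := p₂) rfl
  have m₃ := vertical_mem_lengthSet (q := p₂) (q' := p₃) rfl rfl (hfρ.trans_le hf₂)
  have m₄ := horizontal_mem_lengthSet (f := f) (q := p₃) (q' := q') rfl
  refine ⟨_, add_mem_lengthSet hf.cont
    (add_mem_lengthSet hf.cont (add_mem_lengthSet hf.cont m₁ m₂) m₃) m₄, ?_⟩
  have hstep₁ := sqrt_sq_add_sq_le (q'.1 - q.1) (q'.2.1 - q.2.1)
  have hstep₃ : |q'.2.2 - q.2.2| / f (rad p₂) ≤ |q'.2.2 - q.2.2| / f ρ := by gcongr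
  simp only [p₁, p₂, p₃, sub_self, add_sub_cancel_left, sub_add_cancel_left] at hstep₃ ⊢
  simp only [ne_eq, OfNat.ofNat_ne_zero, not_false_eq_true, zero_pow, add_zero, neg_sq,
    Real.sqrt_sq_eq_abs, he]
  linarith

lemma lengthSet_nonempty (hf : MemF f) (q q' : ℝ × ℝ × ℝ) : (lengthSet f q q').Nonempty :=
  let ⟨L, hL, _⟩ := exists_mem_lengthSet_le hf q q' one_pos
  ⟨L, hL⟩

lemma dCC_le (hf : MemF f) (q q' : ℝ × ℝ × ℝ) {ρ : ℝ} (hρ : 0 < ρ) :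
    dCC f q q' ≤ |q'.1 - q.1| + |q'.2.1 - q.2.1| + 2 * ρ + |q'.2.2 - q.2.2| / f ρ :=
  let ⟨_, hL, hle⟩ := exists_mem_lengthSet_le hf q q' hρ
  (dCC_le_of_mem_lengthSet hL).trans hle

lemma dCC_comm (hf : MemF f) (q q' : ℝ × ℝ × ℝ) : dCC f q q' = dCC f q' q := by
  have h : ∀ p p' : ℝ × ℝ × ℝ, dCC f p p' ≤ dCC f p' p := fun p p' =>
    le_csInf (lengthSet_nonempty hf p' p) fun _ hL =>
      dCC_le_of_mem_lengthSet (mem_lengthSet_comm hf.cont hL)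
  exact (h q q').antisymm (h q' q)

lemma dCC_triangle (hf : MemF f) (q q' q'' : ℝ × ℝ × ℝ) :
    dCC f q q'' ≤ dCC f q q' + dCC f q' q'' := by
  refine le_of_forall_pos_lt_add fun ε hε => ?_
  obtain ⟨L, hL, hLlt⟩ := exists_lt_of_csInf_lt (lengthSet_nonempty hf q q')
    (lt_add_of_pos_right (dCC f q q') (half_pos hε))
  obtain ⟨L', hL', hL'lt⟩ := exists_lt_of_csInf_lt (lengthSet_nonempty hf q' q'')
    (lt_add_of_pos_right (dCC f q' q'') (half_pos hε))
  linarith [dCC_le_of_mem_lengthSet (add_mem_lengthSet hf.cont hL hL'), dCC_eq_sInf f q q',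
    dCC_eq_sInf f q' q'']

lemma rad_lt_of_dCC_lt (hf : MemF f) {q q' : ℝ × ℝ × ℝ} {δ : ℝ} (h : dCC f q q' < δ) :
    rad q' < rad q + 2 * δ := by
  obtain ⟨L, ⟨T, γ, u, P, rfl, rfl, rfl⟩, hL⟩ :=
    exists_lt_of_csInf_lt (lengthSet_nonempty hf q q') h
  linarith [P.rad_le (right_mem_Icc.2 P.hT)]

lemma norm_sub_lt_of_dCC_lt (hf : MemF f) {q q' : ℝ × ℝ × ℝ} {R δ : ℝ} (hR : rad q ≤ R)
    (hδ : δ ≤ 1) (h : dCC f q q' < δ) : ‖q' - q‖ < (1 + f (R + 2)) * δ := by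
  obtain ⟨L, ⟨T, γ, u, P, rfl, rfl, rfl⟩, hL⟩ :=
    exists_lt_of_csInf_lt (lengthSet_nonempty hf q q') h
  have hL₀ := P.pairLength_nonneg
  have hR₀ : 0 ≤ R := (rad_nonneg _).trans hR
  have hweight : f (rad (γ 0) + 2 * pairLength T u) ≤ f (R + 2) :=
    hf.monotoneOn (add_nonneg (rad_nonneg _) (by linarith)) (by simp only [mem_Ici]; linarith)
      (by linarith)
  calc ‖γ T - γ 0‖ ≤ (1 + f (rad (γ 0) + 2 * pairLength T u)) * pairLength T u :=
        P.norm_sub_le_pairLength hf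
    _ ≤ (1 + f (R + 2)) * pairLength T u := by gcongr
    _ < (1 + f (R + 2)) * δ := by
        gcongr
        linarith [hf.nonneg_s9 (by positivity : 0 ≤ R + 2)]

lemma exists_pos_forall_dCC_lt_imp_norm_sub_lt (hf : MemF f) (R : ℝ) {ε : ℝ} (hε : 0 < ε) :
    ∃ δ > 0, ∀ q q' : ℝ × ℝ × ℝ, rad q ≤ R → dCC f q q' < δ → ‖q' - q‖ < ε := by
  set C := 1 + f (|R| + 2)
  have hC : 0 < C := by linarith [hf.nonneg_s9 (by positivity : 0 ≤ |R| + 2)]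
  refine ⟨min 1 (ε / C), lt_min one_pos (div_pos hε hC), fun q q' hR h => ?_⟩
  calc ‖q' - q‖ < C * min 1 (ε / C) :=
        norm_sub_lt_of_dCC_lt hf (hR.trans (le_abs_self R)) (min_le_left _ _) h
    _ ≤ C * (ε / C) := mul_le_mul_of_nonneg_left (min_le_right _ _) hC.le
    _ = ε := mul_div_cancel₀ ε hC.ne'

lemma exists_pos_forall_norm_sub_lt_imp_dCC_lt (hf : MemF f) {ε : ℝ} (hε : 0 < ε) :
    ∃ δ > 0, ∀ q q' : ℝ × ℝ × ℝ, ‖q' - q‖ < δ → dCC f q q' < ε := by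
  set ρ := ε / 5
  have hρ : 0 < ρ := by positivity
  have hfρ : 0 < f ρ := hf.pos ρ hρ
  refine ⟨min ρ (f ρ * ρ), by positivity, fun q q' h => ?_⟩
  have h₁ : |q'.1 - q.1| < ρ := (norm_fst_le (q' - q)).trans_lt (h.trans_le (min_le_left _ _))
  have h₂ : |q'.2.1 - q.2.1| < ρ :=
    ((norm_fst_le (q' - q).2).trans (norm_snd_le _)).trans_lt (h.trans_le (min_le_left _ _))
  have h₃ : |q'.2.2 - q.2.2| / f ρ < ρ := (div_lt_iff₀' hfρ).2 <|
    ((norm_snd_le (q' - q).2).trans (norm_snd_le _)).trans_lt (h.trans_le (min_le_right _ _))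
  linarith [dCC_le hf q q' hρ, show ε = 5 * ρ by ring]

lemma eq_of_dCC_eq_zero (hf : MemF f) {q q' : ℝ × ℝ × ℝ} (h : dCC f q q' = 0) : q = q' := by
  by_contra hne
  have hpos : 0 < ‖q' - q‖ := norm_pos_iff.2 (sub_ne_zero.2 (Ne.symm hne))
  obtain ⟨δ, hδ, hδε⟩ := exists_pos_forall_dCC_lt_imp_norm_sub_lt hf (rad q) hpos
  exact lt_irrefl _ (hδε q q' le_rfl (h ▸ hδ))

lemma cauchySeq_of_dCC (hf : MemF f) {s : ℕ → ℝ × ℝ × ℝ}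
    (hs : ∀ ε : ℝ, 0 < ε → ∃ N : ℕ, ∀ m ≥ N, ∀ n ≥ N, dCC f (s m) (s n) < ε) : CauchySeq s := by
  obtain ⟨N₀, hN₀⟩ := hs 1 one_pos
  have hrad : ∀ n ≥ N₀, rad (s n) ≤ rad (s N₀) + 2 := fun n hn => by
    linarith [rad_lt_of_dCC_lt hf (hN₀ N₀ le_rfl n hn)]
  refine Metric.cauchySeq_iff.2 fun ε hε => ?_
  obtain ⟨δ, hδ, hδε⟩ := exists_pos_forall_dCC_lt_imp_norm_sub_lt hf (rad (s N₀) + 2) hε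
  obtain ⟨N₁, hN₁⟩ := hs δ hδ
  refine ⟨max N₀ N₁, fun m hm n hn => ?_⟩
  rw [dist_eq_norm]
  exact hδε (s n) (s m) (hrad n (le_of_max_le_left hn))
    (hN₁ n (le_of_max_le_right hn) m (le_of_max_le_right hm))

lemma tendsto_dCC_of_tendsto (hf : MemF f) {s : ℕ → ℝ × ℝ × ℝ} {q : ℝ × ℝ × ℝ}
    (h : Tendsto s atTop (nhds q)) :
    Tendsto (fun n => dCC f (s n) q) atTop (nhds 0) := by
  refine Metric.tendsto_atTop.2 fun ε hε => ?_
  obtain ⟨δ, hδ, hδε⟩ := exists_pos_forall_norm_sub_lt_imp_dCC_lt hf hε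
  obtain ⟨N, hN⟩ := Metric.tendsto_atTop.1 h δ hδ
  refine ⟨N, fun n hn => ?_⟩
  rw [Real.dist_eq, sub_zero, abs_of_nonneg (dCC_nonneg f _ _)]
  exact hδε (s n) q (by rw [← dist_eq_norm, dist_comm]; exact hN n hn)

end MemF

/-- `d_CC` is a well-defined metric on `ℝ³` inducing the Euclidean
topology, and `(ℝ³, d_CC)` is complete. -/
theorem dCC_metric_and_complete
    (f : ℝ → ℝ) (hf : MemF f) :
    (∀ q : ℝ × ℝ × ℝ, dCC f q q = 0) ∧
    (∀ q q' : ℝ × ℝ × ℝ, 0 ≤ dCC f q q') ∧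
    (∀ q q' : ℝ × ℝ × ℝ, dCC f q q' = dCC f q' q) ∧
    (∀ q q' q'' : ℝ × ℝ × ℝ, dCC f q q'' ≤ dCC f q q' + dCC f q' q'') ∧
    (∀ q q' : ℝ × ℝ × ℝ, dCC f q q' = 0 → q = q') ∧
    -- the topology induced by d_CC is the Euclidean topology
    (∀ q : ℝ × ℝ × ℝ, ∀ ε : ℝ, 0 < ε → ∃ δ : ℝ, 0 < δ ∧
      (∀ q' : ℝ × ℝ × ℝ, dCC f q q' < δ → ‖q' - q‖ < ε) ∧
      (∀ q' : ℝ × ℝ × ℝ, ‖q' - q‖ < δ → dCC f q q' < ε)) ∧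
    -- completeness
    (∀ s : ℕ → ℝ × ℝ × ℝ,
      (∀ ε : ℝ, 0 < ε → ∃ N : ℕ, ∀ m ≥ N, ∀ n ≥ N, dCC f (s m) (s n) < ε) →
      ∃ q : ℝ × ℝ × ℝ, Filter.Tendsto (fun n => dCC f (s n) q) Filter.atTop (nhds 0)) := by
  refine ⟨dCC_self f, dCC_nonneg f, dCC_comm hf, dCC_triangle hf,
    fun q q' => eq_of_dCC_eq_zero hf, fun q ε hε => ?_, fun s hs => ?_⟩
  · obtain ⟨δ₁, hδ₁, h₁⟩ := exists_pos_forall_dCC_lt_imp_norm_sub_lt hf (rad q) hε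
    obtain ⟨δ₂, hδ₂, h₂⟩ := exists_pos_forall_norm_sub_lt_imp_dCC_lt hf hε
    exact ⟨min δ₁ δ₂, lt_min hδ₁ hδ₂, fun q' h => h₁ q q' le_rfl (h.trans_le (min_le_left _ _)),
      fun q' h => h₂ q q' (h.trans_le (min_le_right _ _))⟩
  · obtain ⟨q, hq⟩ := cauchySeq_tendsto_of_complete (cauchySeq_of_dCC hf hs)
    exact ⟨q, tendsto_dCC_of_tendsto hf hq⟩
end
end

section
/- Let q₀=(x₀,y₀,z₀) with (x₀,y₀)≠(0,0) and let γ be the normal geodesic from q₀ with initial covector λ₀=(u₀,v₀,w₀). In cylindrical coordinates γ=(r,θ,z) solves r̈ = −w₀²f(r)f'(r) + K²/r³, θ̇ = K/r², ż = w₀f(r)², with K=x₀v₀−y₀u₀ conserved, r(0)=r₀=√(x₀²+y₀²), ṙ(0)=L/r₀, θ(0)=θ₀, z(0)=z₀, where L=x₀u₀+y₀v₀. Let λ̂₀=(û₀,v̂₀,w₀) be the reflected covector defined by (û₀,v̂₀)ᵀ = (1/(x₀²+y₀²))·[[x₀²−y₀², 2x₀y₀],[2x₀y₀, y₀²−x₀²]]·(u₀,v₀)ᵀ,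 and let γ̂ be the geodesic from q₀ with covector λ̂₀. Then K(λ̂₀)=−K(λ₀) and L(λ̂₀)=L(λ₀), so γ̂ has the same radial component r̂(t)=r(t) and opposing angle θ̂(t)−θ₀ = −(θ(t)−θ₀); if K≠0, γ and γ̂ are distinct geodesics which intersect for the first time at the time T = min{t>0 : ∫₀^t |K|/r(s)² ds = π}, at a point on the half-plane {θ = θ₀+π}. -/
noncomputable section

/-!
Reflecting the initial covector in the line through `q₀` flips the angular momentum `K` and keeps
the radial momentum `L`. The radial equation `r̈ = -w₀² f f' + K²/r³` sees `K` only through `K²`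
and its right side is `C¹`, hence locally Lipschitz, on `r > 0`; so `r̂` and `r` solve the same
second-order ODE with the same initial data and coincide. Then `θ̂ - θ₀` and `θ - θ₀` have opposite
derivatives, and `ẑ`, `z` equal ones. Two points at angles `θ₀ ± α` on one circle coincide iff
`sin α = 0`, while `|θ t - θ₀| = ∫₀ᵗ |K|/r²` increases strictly from `0`; so the geodesics first
meet when this integral reaches `π`.
-/

open Set Filter Topology Real

theorem LocallyLipschitzOn.secondOrderField {α : Type*} [PseudoEMetricSpace α] {G : α → α}
    {U : Set α} (hG : LocallyLipschitzOn U G) :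
    LocallyLipschitzOn (U ×ˢ univ) fun p : α × α => (p.2, G p.1) := by
  rintro p ⟨hp, -⟩
  obtain ⟨K, W, hW, hGW⟩ := hG hp
  refine ⟨_, Prod.fst ⁻¹' W, ?_, LipschitzWith.prod_snd.lipschitzOnWith.prodMk
    (hGW.comp LipschitzWith.prod_fst.lipschitzOnWith (mapsTo_preimage _ _))⟩
  exact tendsto_nhdsWithin_iff.2
    ⟨continuous_fst.continuousWithinAt,
      eventually_nhdsWithin_of_forall fun q (hq : q ∈ U ×ˢ univ) => hq.1⟩ hW

section ODE

variable {E : Type*} [NormedAddCommGroup E] [NormedSpace ℝ E]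

theorem eq_of_hasDerivAt_eq {f g f' : ℝ → E} (hf : ∀ t, HasDerivAt f (f' t) t)
    (hg : ∀ t, HasDerivAt g (f' t) t) (t₀ : ℝ) (h₀ : f t₀ = g t₀) : f = g :=
  eq_of_fderiv_eq (fun t => (hf t).differentiableAt) (fun t => (hg t).differentiableAt)
    (fun t => by rw [(hf t).hasFDerivAt.fderiv, (hg t).hasFDerivAt.fderiv]) t₀ h₀

/-- Local uniqueness propagates along `ℝ`: the coincidence set is clopen. -/
theorem ODE_solution_unique_univ_of_locallyLipschitzOn {v : E → E} {s : Set E}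
    (hv : LocallyLipschitzOn s v) {f g : ℝ → E} (hf : ∀ t, HasDerivAt f (v (f t)) t ∧ f t ∈ s)
    (hg : ∀ t, HasDerivAt g (v (g t)) t ∧ g t ∈ s) {t₀ : ℝ} (h₀ : f t₀ = g t₀) : f = g := by
  have hfc : Continuous f := continuous_iff_continuousAt.2 fun t => (hf t).1.continuousAt
  have hgc : Continuous g := continuous_iff_continuousAt.2 fun t => (hg t).1.continuousAt
  have hopen : IsOpen {t | f t = g t} := by
    refine isOpen_iff_mem_nhds.2 fun t₁ (h₁ : f t₁ = g t₁) => ?_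
    obtain ⟨K, W, hW, hvW⟩ := hv (hf t₁).2
    have hfW : ∀ᶠ t in 𝓝 t₁, f t ∈ W :=
      tendsto_nhdsWithin_iff.2 ⟨hfc.continuousAt, .of_forall fun t => (hf t).2⟩ hW
    have hgW : ∀ᶠ t in 𝓝 t₁, g t ∈ W :=
      tendsto_nhdsWithin_iff.2 ⟨hgc.continuousAt, .of_forall fun t => (hg t).2⟩ (h₁ ▸ hW)
    exact ODE_solution_unique_of_eventually (v := fun _ => v) (s := fun _ => W)
      (.of_forall fun _ => hvW) (hfW.mono fun t ht => ⟨(hf t).1, ht⟩)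
      (hgW.mono fun t ht => ⟨(hg t).1, ht⟩) h₁
  have hall := IsClopen.eq_univ ⟨isClosed_eq hfc hgc, hopen⟩ ⟨t₀, h₀⟩
  exact funext fun t => (hall.symm ▸ mem_univ t : t ∈ {t | f t = g t})

theorem ODE_secondOrder_solution_unique_univ {G : E → E} {U : Set E}
    (hG : LocallyLipschitzOn U G) {r r' ρ ρ' : ℝ → E}
    (hr : ∀ t, HasDerivAt r (r' t) t) (hr' : ∀ t, HasDerivAt r' (G (r t)) t)
    (hrU : ∀ t, r t ∈ U)
    (hρ : ∀ t, HasDerivAt ρ (ρ' t) t) (hρ' : ∀ t, HasDerivAt ρ' (G (ρ t)) t)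
    (hρU : ∀ t, ρ t ∈ U) {t₀ : ℝ} (h₀ : r t₀ = ρ t₀) (h₀' : r' t₀ = ρ' t₀) : r = ρ := by
  have h := ODE_solution_unique_univ_of_locallyLipschitzOn hG.secondOrderField
    (f := fun t => (r t, r' t)) (g := fun t => (ρ t, ρ' t))
    (fun t => ⟨(hr t).prodMk (hr' t), hrU t, trivial⟩)
    (fun t => ⟨(hρ t).prodMk (hρ' t), hρU t, trivial⟩) (Prod.ext h₀ h₀')
  exact funext fun t => congrArg Prod.fst (congrFun h t)

end ODE

def radialForce (f : ℝ → ℝ) (w K ρ : ℝ) : ℝ := -(w ^ 2) * f ρ * deriv f ρ + K ^ 2 / ρ ^ 3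

theorem radialForce_neg (f : ℝ → ℝ) (w K ρ : ℝ) :
    radialForce f w (-K) ρ = radialForce f w K ρ := by
  simp only [radialForce, neg_sq]

theorem contDiffOn_radialForce {f : ℝ → ℝ} (hf : ContDiffOn ℝ 2 f (Ioi 0)) (w K : ℝ) :
    ContDiffOn ℝ 1 (radialForce f w K) (Ioi 0) :=
  ((contDiffOn_const.mul (hf.of_le one_le_two)).mul
      (hf.deriv_of_isOpen isOpen_Ioi (by norm_num))).add
    (contDiffOn_const.div (contDiff_id.pow 3).contDiffOn fun _ hρ => pow_ne_zero 3 (ne_of_gt hρ))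

theorem reflect_angularMomentum_radialMomentum {x y u v uh vh : ℝ} (hxy : x ^ 2 + y ^ 2 ≠ 0)
    (huh : uh = ((x ^ 2 - y ^ 2) * u + 2 * x * y * v) / (x ^ 2 + y ^ 2))
    (hvh : vh = (2 * x * y * u + (y ^ 2 - x ^ 2) * v) / (x ^ 2 + y ^ 2)) :
    x * vh - y * uh = -(x * v - y * u) ∧ x * uh + y * vh = x * u + y * v := by
  subst huh hvh
  constructor <;> field_simp <;> ring

theorem abs_sub_eq_integral_abs_div_sq {θ r : ℝ → ℝ} {K t : ℝ}
    (hθ : ∀ s, HasDerivAt θ (K / r s ^ 2) s) (hr : Continuous r) (hr₀ : ∀ s, r s ≠ 0)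
    (ht : 0 ≤ t) : |θ t - θ 0| = ∫ s in (0 : ℝ)..t, |K| / r s ^ 2 := by
  have hcont : Continuous fun s => (r s ^ 2)⁻¹ := (hr.pow 2).inv₀ fun s => pow_ne_zero 2 (hr₀ s)
  have hftc : θ t - θ 0 = K * ∫ s in (0 : ℝ)..t, (r s ^ 2)⁻¹ := by
    rw [← intervalIntegral.integral_const_mul, ← intervalIntegral.integral_eq_sub_of_hasDerivAt
      (fun s _ => hθ s) ((continuous_const.mul hcont).intervalIntegrable 0 t)]
    simp only [div_eq_mul_inv]
  have hnonneg : 0 ≤ ∫ s in (0 : ℝ)..t, (r s ^ 2)⁻¹ :=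
    intervalIntegral.integral_nonneg ht fun s _ => by positivity
  rw [hftc, abs_mul, abs_of_nonneg hnonneg, ← intervalIntegral.integral_const_mul]
  simp only [div_eq_mul_inv]

theorem strictMono_integral_of_pos {g : ℝ → ℝ} (hg : Continuous g) (hpos : ∀ t, 0 < g t)
    (a : ℝ) : StrictMono fun t => ∫ s in a..t, g s :=
  strictMono_of_hasDerivAt_pos (fun t => (hg.integral_hasStrictDerivAt a t).hasDerivAt) hpos

theorem cylindrical_eq_reflect_iff {ρ z θ₀ α β : ℝ} (hρ : ρ ≠ 0) (hβ : β - θ₀ = -(α - θ₀)) :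
    ((ρ * cos α, ρ * sin α, z) : ℝ × ℝ × ℝ) = (ρ * cos β, ρ * sin β, z) ↔ sin (α - θ₀) = 0 := by
  have hα : α = θ₀ + (α - θ₀) := by ring
  have hβ' : β = θ₀ - (α - θ₀) := by linarith
  clear hβ
  generalize α - θ₀ = d at hα hβ' ⊢
  subst hα hβ'
  simp only [Prod.mk.injEq, and_true, mul_right_inj' hρ, cos_add, cos_sub, sin_add, sin_sub]
  constructor
  · rintro ⟨hcos, hsin⟩
    linear_combination (-(sin θ₀) / 2) * hcos + (cos θ₀ / 2) * hsin
      - sin d * sin_sq_add_cos_sq θ₀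
  · intro hd
    exact ⟨by linear_combination (-2 * sin θ₀) * hd, by linear_combination (2 * cos θ₀) * hd⟩

theorem reflected_angles_first_meet {r θ θh z : ℝ → ℝ} {θ₀ K T : ℝ} (hr : Continuous r)
    (hrpos : ∀ t, 0 < r t) (hK : K ≠ 0) (hθ : ∀ t, HasDerivAt θ (K / r t ^ 2) t)
    (hθ0 : θ 0 = θ₀) (hopp : ∀ t, θh t - θ₀ = -(θ t - θ₀)) (hT : 0 < T)
    (hint : ∫ s in (0 : ℝ)..T, |K| / r s ^ 2 = π) :
    (∀ t ∈ Ioo 0 T, ((r t * cos (θ t), r t * sin (θ t), z t) : ℝ × ℝ × ℝ) ≠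
        (r t * cos (θh t), r t * sin (θh t), z t)) ∧
      ((r T * cos (θ T), r T * sin (θ T), z T) : ℝ × ℝ × ℝ) =
        (r T * cos (θh T), r T * sin (θh T), z T) ∧
      |θ T - θ₀| = π := by
  have hmeet : ∀ t, ((r t * cos (θ t), r t * sin (θ t), z t) : ℝ × ℝ × ℝ) =
      (r t * cos (θh t), r t * sin (θh t), z t) ↔ sin (θ t - θ₀) = 0 :=
    fun t => cylindrical_eq_reflect_iff (hrpos t).ne' (hopp t)
  have hsweep : ∀ t, 0 ≤ t → |θ t - θ₀| = ∫ s in (0 : ℝ)..t, |K| / r s ^ 2 := fun t ht =>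
    hθ0 ▸ abs_sub_eq_integral_abs_div_sq hθ hr (fun s => (hrpos s).ne') ht
  have hmono := strictMono_integral_of_pos
    (continuous_const.div (hr.pow 2) fun s => pow_ne_zero 2 (hrpos s).ne')
    (fun s => div_pos (abs_pos.2 hK) (pow_pos (hrpos s) 2)) 0
  have hθT : |θ T - θ₀| = π := (hsweep T hT.le).trans hint
  refine ⟨?_, (hmeet T).2 ?_, hθT⟩
  · rintro t ⟨ht0, htT⟩
    have hpos : 0 < |θ t - θ₀| := by
      simpa [hsweep t ht0.le] using hmono ht0
    have hlt : |θ t - θ₀| < π := hint ▸ hsweep t ht0.le ▸ hmono htT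
    rw [Ne, hmeet, sin_eq_zero_iff_of_lt_of_lt (abs_lt.1 hlt).1 (abs_lt.1 hlt).2]
    exact abs_pos.1 hpos
  · rcases (abs_eq pi_pos.le).1 hθT with h | h <;> simp [h]

theorem symmetrizing_geodesic_general
    (f : ℝ → ℝ) (hf : MemF f)
    (x₀ y₀ z₀ u₀ v₀ w₀ : ℝ) (hq : 0 < x₀ ^ 2 + y₀ ^ 2)
    (θ₀ : ℝ)
    (K L : ℝ) (hK : K = x₀ * v₀ - y₀ * u₀) (hL : L = x₀ * u₀ + y₀ * v₀) (hKne : K ≠ 0)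
    (uh vh : ℝ)
    (huh : uh = ((x₀ ^ 2 - y₀ ^ 2) * u₀ + 2 * x₀ * y₀ * v₀) / (x₀ ^ 2 + y₀ ^ 2))
    (hvh : vh = (2 * x₀ * y₀ * u₀ + (y₀ ^ 2 - x₀ ^ 2) * v₀) / (x₀ ^ 2 + y₀ ^ 2))
    (Kh Lh : ℝ) (hKh : Kh = x₀ * vh - y₀ * uh) (hLh : Lh = x₀ * uh + y₀ * vh)
    -- the geodesic γ in cylindrical coordinates
    (r θ z r' : ℝ → ℝ)
    (hrpos : ∀ t, 0 < r t)
    (hr : ∀ t, HasDerivAt r (r' t) t)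
    (hr' : ∀ t, HasDerivAt r'
      (-(w₀ ^ 2) * f (r t) * deriv f (r t) + K ^ 2 / r t ^ 3) t)
    (hθ : ∀ t, HasDerivAt θ (K / r t ^ 2) t)
    (hz : ∀ t, HasDerivAt z (w₀ * f (r t) ^ 2) t)
    (hr0 : r 0 = Real.sqrt (x₀ ^ 2 + y₀ ^ 2))
    (hr'0 : r' 0 = L / Real.sqrt (x₀ ^ 2 + y₀ ^ 2))
    (hθ0 : θ 0 = θ₀) (hz0 : z 0 = z₀)
    -- the reflected geodesic γ̂ in cylindrical coordinates
    (rh θh zh rh' : ℝ → ℝ)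
    (hrhpos : ∀ t, 0 < rh t)
    (hrh : ∀ t, HasDerivAt rh (rh' t) t)
    (hrh' : ∀ t, HasDerivAt rh'
      (-(w₀ ^ 2) * f (rh t) * deriv f (rh t) + Kh ^ 2 / rh t ^ 3) t)
    (hθh : ∀ t, HasDerivAt θh (Kh / rh t ^ 2) t)
    (hzh : ∀ t, HasDerivAt zh (w₀ * f (rh t) ^ 2) t)
    (hrh0 : rh 0 = Real.sqrt (x₀ ^ 2 + y₀ ^ 2))
    (hrh'0 : rh' 0 = Lh / Real.sqrt (x₀ ^ 2 + y₀ ^ 2))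
    (hθh0 : θh 0 = θ₀) (hzh0 : zh 0 = z₀) :
    Kh = -K ∧ Lh = L ∧
    (∀ t, rh t = r t) ∧
    (∀ t, θh t - θ₀ = -(θ t - θ₀)) ∧
    (∀ T : ℝ, 0 < T → (∫ s in (0:ℝ)..T, |K| / r s ^ 2) = Real.pi →
      ((∃ t : ℝ, (r t * Real.cos (θ t), r t * Real.sin (θ t), z t) ≠
          (rh t * Real.cos (θh t), rh t * Real.sin (θh t), zh t)) ∧
       (∀ t ∈ Set.Ioo (0:ℝ) T,
          (r t * Real.cos (θ t), r t * Real.sin (θ t), z t) ≠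
          (rh t * Real.cos (θh t), rh t * Real.sin (θh t), zh t)) ∧
       (r T * Real.cos (θ T), r T * Real.sin (θ T), z T) =
          (rh T * Real.cos (θh T), rh T * Real.sin (θh T), zh T) ∧
       |θ T - θ₀| = Real.pi)) := by
  obtain ⟨hKh', hLh'⟩ : Kh = -K ∧ Lh = L := by
    subst hK hL hKh hLh; exact reflect_angularMomentum_radialMomentum hq.ne' huh hvh
  subst hKh'
  have hrr : rh = r := ODE_secondOrder_solution_unique_univ
    ((contDiffOn_radialForce hf.smooth w₀ K).locallyLipschitzOn (convex_Ioi 0))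
    hrh (fun t => radialForce_neg f w₀ K (rh t) ▸ hrh' t) hrhpos hr hr' hrpos
    (hrh0.trans hr0.symm) (by rw [hrh'0, hr'0, hLh'])
  subst rh
  have hθθ : θh = fun t => 2 * θ₀ - θ t :=
    eq_of_hasDerivAt_eq (fun t => neg_div _ K ▸ hθh t) (fun t => (hθ t).const_sub _) 0
      (by rw [hθh0, hθ0]; ring)
  have hopp : ∀ t, θh t - θ₀ = -(θ t - θ₀) := fun t => by rw [hθθ]; ring
  have hzz : zh = z := eq_of_hasDerivAt_eq hzh hz 0 (hzh0.trans hz0.symm)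
  subst zh
  refine ⟨rfl, hLh', fun _ => rfl, hopp, fun T hT hint => ?_⟩
  obtain ⟨hbefore, hmeet, hθT⟩ := reflected_angles_first_meet (z := z)
    (continuous_iff_continuousAt.2 fun t => (hr t).continuousAt) hrpos hKne hθ hθ0 hopp hT hint
  exact ⟨⟨T / 2, hbefore _ ⟨half_pos hT, half_lt_self hT⟩⟩, hbefore, hmeet, hθT⟩

/-- the reflected covector `λ̂₀` gives a symmetrizing geodesic `γ̂`
with `K(λ̂₀) = −K(λ₀)`, `L(λ̂₀) = L(λ₀)`, the same radial component and opposing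
angle; if `K ≠ 0` the two geodesics are distinct and intersect for the first time
at the time `T` with `∫₀ᵀ |K|/r² = π`, on the half plane `{θ = θ₀ + π}`. -/
theorem symmetrizing_geodesic
    (f : ℝ → ℝ) (hf : MemF f)
    (x₀ y₀ z₀ u₀ v₀ w₀ : ℝ) (hq : 0 < x₀ ^ 2 + y₀ ^ 2)
    (θ₀ : ℝ)
    (hx₀ : x₀ = Real.sqrt (x₀ ^ 2 + y₀ ^ 2) * Real.cos θ₀)
    (hy₀ : y₀ = Real.sqrt (x₀ ^ 2 + y₀ ^ 2) * Real.sin θ₀)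
    (K L : ℝ) (hK : K = x₀ * v₀ - y₀ * u₀) (hL : L = x₀ * u₀ + y₀ * v₀) (hKne : K ≠ 0)
    (uh vh : ℝ)
    (huh : uh = ((x₀ ^ 2 - y₀ ^ 2) * u₀ + 2 * x₀ * y₀ * v₀) / (x₀ ^ 2 + y₀ ^ 2))
    (hvh : vh = (2 * x₀ * y₀ * u₀ + (y₀ ^ 2 - x₀ ^ 2) * v₀) / (x₀ ^ 2 + y₀ ^ 2))
    (Kh Lh : ℝ) (hKh : Kh = x₀ * vh - y₀ * uh) (hLh : Lh = x₀ * uh + y₀ * vh)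
    -- the geodesic γ in cylindrical coordinates
    (r θ z r' : ℝ → ℝ)
    (hrpos : ∀ t, 0 < r t)
    (hr : ∀ t, HasDerivAt r (r' t) t)
    (hr' : ∀ t, HasDerivAt r'
      (-(w₀ ^ 2) * f (r t) * deriv f (r t) + K ^ 2 / r t ^ 3) t)
    (hθ : ∀ t, HasDerivAt θ (K / r t ^ 2) t)
    (hz : ∀ t, HasDerivAt z (w₀ * f (r t) ^ 2) t)
    (hr0 : r 0 = Real.sqrt (x₀ ^ 2 + y₀ ^ 2))
    (hr'0 : r' 0 = L / Real.sqrt (x₀ ^ 2 + y₀ ^ 2))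
    (hθ0 : θ 0 = θ₀) (hz0 : z 0 = z₀)
    -- the reflected geodesic γ̂ in cylindrical coordinates
    (rh θh zh rh' : ℝ → ℝ)
    (hrhpos : ∀ t, 0 < rh t)
    (hrh : ∀ t, HasDerivAt rh (rh' t) t)
    (hrh' : ∀ t, HasDerivAt rh'
      (-(w₀ ^ 2) * f (rh t) * deriv f (rh t) + Kh ^ 2 / rh t ^ 3) t)
    (hθh : ∀ t, HasDerivAt θh (Kh / rh t ^ 2) t)
    (hzh : ∀ t, HasDerivAt zh (w₀ * f (rh t) ^ 2) t)
    (hrh0 : rh 0 = Real.sqrt (x₀ ^ 2 + y₀ ^ 2))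
    (hrh'0 : rh' 0 = Lh / Real.sqrt (x₀ ^ 2 + y₀ ^ 2))
    (hθh0 : θh 0 = θ₀) (hzh0 : zh 0 = z₀) :
    Kh = -K ∧ Lh = L ∧
    (∀ t, rh t = r t) ∧
    (∀ t, θh t - θ₀ = -(θ t - θ₀)) ∧
    (∀ T : ℝ, 0 < T → (∫ s in (0:ℝ)..T, |K| / r s ^ 2) = Real.pi →
      ((∃ t : ℝ, (r t * Real.cos (θ t), r t * Real.sin (θ t), z t) ≠
          (rh t * Real.cos (θh t), rh t * Real.sin (θh t), zh t)) ∧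
       (∀ t ∈ Set.Ioo (0:ℝ) T,
          (r t * Real.cos (θ t), r t * Real.sin (θ t), z t) ≠
          (rh t * Real.cos (θh t), rh t * Real.sin (θh t), zh t)) ∧
       (r T * Real.cos (θ T), r T * Real.sin (θ T), z T) =
          (rh T * Real.cos (θh T), rh T * Real.sin (θh T), zh T) ∧
       |θ T - θ₀| = Real.pi)) :=
  symmetrizing_geodesic_general f hf x₀ y₀ z₀ u₀ v₀ w₀ hq θ₀ K L hK hL hKne uh vh huh hvh Kh Lh hKh
    hLh r θ z r' hrpos hr hr' hθ hz hr0 hr'0 hθ0 hz0 rh θh zh rh' hrhpos hrh hrh' hθh hzh hrh0 hrh'0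
    hθh0 hzh0
end
end

section
/- Let q₀=(x₀,y₀,z₀) with (x₀,y₀)≠(0,0) and let γ be a constant-speed normal geodesic from q₀ with initial covector λ₀=(u₀,v₀,w₀) whose angular momentum K=x₀v₀−y₀u₀ is nonzero, with cylindrical radial component r(t). Then γ is not a length minimizer on [0,t] for any t > T, where T = min{t>0 : ∫₀^t |K|/r(s)² ds = π}; in particular t_cut(γ) ≤ T. -/
noncomputable section

/-! After the geodesic has swept an angle `|θ t - θ 0| > π` around the `z`-axis, rescale its
angular coordinate to `θ 0 + l (θ - θ 0)` with `|l| < 1` chosen so that the final angle changes by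
`∓ 2π`. The new curve has the same endpoints, the same `r` and `z`, and a strictly smaller angular
velocity; by conservation of energy the geodesic has constant speed `c`, so the competitor has speed
`< c` everywhere and is strictly shorter than `c t`. -/

open Real

theorem dCC_le_pairLength {f : ℝ → ℝ} {T : ℝ} {γ u : ℝ → ℝ × ℝ × ℝ}
    (h : IsAdmissiblePair f T γ u) : dCC f (γ 0) (γ T) ≤ pairLength T u := by
  refine csInf_le ⟨0, ?_⟩ ⟨T, γ, u, h, rfl, rfl, rfl⟩
  rintro L ⟨T', _, u', h', -, -, rfl⟩
  exact intervalIntegral.integral_nonneg h'.hT fun _ _ => Real.sqrt_nonneg _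

theorem pairLength_lt_mul {u : ℝ → ℝ × ℝ × ℝ} {c t : ℝ} (ht : 0 < t)
    (hu : Continuous fun s => ctrlNorm (u s)) (hlt : ∀ s, ctrlNorm (u s) < c) :
    pairLength t u < c * t := by
  have h := intervalIntegral.integral_lt_integral_of_continuousOn_of_le_of_exists_lt ht
    hu.continuousOn continuousOn_const (fun s _ => (hlt s).le) ⟨0, ⟨le_rfl, ht.le⟩, hlt 0⟩
  simpa [pairLength, mul_comm] using h

def polarCurve (ρ φ ζ : ℝ → ℝ) (s : ℝ) : ℝ × ℝ × ℝ :=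
  (ρ s * cos (φ s), ρ s * sin (φ s), ζ s)

/-- The control driving `polarCurve ρ φ ζ` when `ρ' = ρ̇`, `φ' = φ̇` and `ζ̇ = w f(ρ)`. -/
def polarControl (ρ φ ρ' φ' w : ℝ → ℝ) (s : ℝ) : ℝ × ℝ × ℝ :=
  (ρ' s * cos (φ s) - ρ s * φ' s * sin (φ s), ρ' s * sin (φ s) + ρ s * φ' s * cos (φ s), w s)

theorem rad_polarCurve {ρ : ℝ → ℝ} (φ ζ : ℝ → ℝ) {s : ℝ} (hρ : 0 ≤ ρ s) :
    rad (polarCurve ρ φ ζ s) = ρ s := by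
  rw [rad, polarCurve]
  dsimp only
  rw [show (ρ s * cos (φ s)) ^ 2 + (ρ s * sin (φ s)) ^ 2 = ρ s ^ 2 by
    linear_combination ρ s ^ 2 * sin_sq_add_cos_sq (φ s), Real.sqrt_sq hρ]

theorem ctrlNorm_polarControl (ρ φ ρ' φ' w : ℝ → ℝ) (s : ℝ) :
    ctrlNorm (polarControl ρ φ ρ' φ' w s) = √(ρ' s ^ 2 + (ρ s * φ' s) ^ 2 + w s ^ 2) := by
  rw [ctrlNorm, polarControl]
  congr 1
  linear_combination (ρ' s ^ 2 + (ρ s * φ' s) ^ 2) * sin_sq_add_cos_sq (φ s)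

theorem polarCurve_eq_of_coe_eq {ρ φ ψ ζ : ℝ → ℝ} {s : ℝ}
    (h : (φ s : Real.Angle) = ψ s) : polarCurve ρ φ ζ s = polarCurve ρ ψ ζ s := by
  simp only [polarCurve, ← Real.Angle.cos_coe, ← Real.Angle.sin_coe, h]

theorem isAdmissiblePair_polarCurve {f ρ φ ζ ρ' φ' w : ℝ → ℝ} {t : ℝ} (ht : 0 ≤ t)
    (hρ : ∀ s, HasDerivAt ρ (ρ' s) s) (hφ : ∀ s, HasDerivAt φ (φ' s) s)
    (hζ : ∀ s, HasDerivAt ζ (w s * f (ρ s)) s) (hρ_nonneg : ∀ s, 0 ≤ ρ s)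
    (hρ' : Continuous ρ') (hφ' : Continuous φ') (hw : Continuous w)
    (hwf : Continuous fun s => w s * f (ρ s)) :
    IsAdmissiblePair f t (polarCurve ρ φ ζ) (polarControl ρ φ ρ' φ' w) := by
  have hρc : Continuous ρ := continuous_iff_continuousAt.2 fun s => (hρ s).continuousAt
  have hφc : Continuous φ := continuous_iff_continuousAt.2 fun s => (hφ s).continuousAt
  have hu : Continuous (polarControl ρ φ ρ' φ' w) := by unfold polarControl; fun_prop
  have hx : ∀ s, HasDerivAt (fun τ => (polarCurve ρ φ ζ τ).1)
      (polarControl ρ φ ρ' φ' w s).1 s := fun s =>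
    ((hρ s).mul (hφ s).cos).congr_deriv (by simp only [polarControl]; ring)
  have hy : ∀ s, HasDerivAt (fun τ => (polarCurve ρ φ ζ τ).2.1)
      (polarControl ρ φ ρ' φ' w s).2.1 s := fun s =>
    ((hρ s).mul (hφ s).sin).congr_deriv (by simp only [polarControl]; ring)
  have hz : ∀ s, HasDerivAt (fun τ => (polarCurve ρ φ ζ τ).2.2)
      ((polarControl ρ φ ρ' φ' w s).2.2 * f (rad (polarCurve ρ φ ζ s))) s := fun s => by
    rw [rad_polarCurve φ ζ (hρ_nonneg s)]; exact hζ s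
  have hzc : Continuous fun s =>
      (polarControl ρ φ ρ' φ' w s).2.2 * f (rad (polarCurve ρ φ ζ s)) := by
    simpa only [polarControl, rad_polarCurve φ ζ (hρ_nonneg _)] using hwf
  refine ⟨ht, hu.aestronglyMeasurable, ((by unfold ctrlNorm; fun_prop :
    Continuous ctrlNorm).comp hu |>.pow 2).integrableOn_Icc, fun s _ => ?_, fun s _ => ?_,
    fun s _ => ?_⟩
  · rw [intervalIntegral.integral_eq_sub_of_hasDerivAt (fun τ _ => hx τ)
      ((continuous_fst.comp hu).intervalIntegrable 0 s)]; ring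
  · rw [intervalIntegral.integral_eq_sub_of_hasDerivAt (fun τ _ => hy τ)
      ((continuous_fst.comp (continuous_snd.comp hu)).intervalIntegrable 0 s)]; ring
  · rw [intervalIntegral.integral_eq_sub_of_hasDerivAt (fun τ _ => hz τ)
      (hzc.intervalIntegrable 0 s)]; ring

/-- Twice the Hamiltonian `H_f` along a normal geodesic, in cylindrical coordinates. -/
def radialEnergy (f : ℝ → ℝ) (K w ρ v : ℝ) : ℝ := v ^ 2 + K ^ 2 / ρ ^ 2 + w ^ 2 * f ρ ^ 2

theorem radialEnergy_polar (f : ℝ → ℝ) (x y u v w : ℝ) (hR : √(x ^ 2 + y ^ 2) ≠ 0) :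
    radialEnergy f (x * v - y * u) w √(x ^ 2 + y ^ 2) ((x * u + y * v) / √(x ^ 2 + y ^ 2)) =
      u ^ 2 + v ^ 2 + f √(x ^ 2 + y ^ 2) ^ 2 * w ^ 2 := by
  have hR2 : √(x ^ 2 + y ^ 2) ^ 2 = x ^ 2 + y ^ 2 := Real.sq_sqrt (by positivity)
  have hxy : x ^ 2 + y ^ 2 ≠ 0 := by rw [← hR2]; exact pow_ne_zero 2 hR
  rw [radialEnergy, div_pow, ← add_div, hR2]
  field_simp
  ring

theorem radialEnergy_eq_initial {f r r' : ℝ → ℝ} {K w : ℝ} (hf : DifferentiableOn ℝ f (Set.Ioi 0))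
    (hr_pos : ∀ t, 0 < r t) (hr : ∀ t, HasDerivAt r (r' t) t)
    (hr' : ∀ t, HasDerivAt r' (-(w ^ 2) * f (r t) * deriv f (r t) + K ^ 2 / r t ^ 3) t) (s : ℝ) :
    radialEnergy f K w (r s) (r' s) = radialEnergy f K w (r 0) (r' 0) := by
  have hderiv : ∀ t, HasDerivAt (fun τ => radialEnergy f K w (r τ) (r' τ)) 0 t := fun t => by
    have hft : HasDerivAt f (deriv f (r t)) (r t) :=
      (hf.differentiableAt (Ioi_mem_nhds (hr_pos t))).hasDerivAt
    have hrt := (hr_pos t).ne'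
    have h := (((hr' t).pow 2).add ((hasDerivAt_const t (K ^ 2)).div ((hr t).pow 2)
      (pow_ne_zero 2 hrt))).add (((hft.comp t (hr t)).pow 2).const_mul (w ^ 2))
    refine h.congr_deriv ?_
    simp only [Pi.pow_apply, Function.comp_apply]
    field_simp
    ring
  exact is_const_of_deriv_eq_zero (fun t => (hderiv t).differentiableAt)
    (fun t => (hderiv t).deriv) s 0

theorem pi_lt_abs_sub_of_integral_eq_pi {r θ : ℝ → ℝ} {K T t : ℝ} (hK : K ≠ 0)
    (hr : Continuous r) (hr_pos : ∀ s, 0 < r s) (hθ : ∀ s, HasDerivAt θ (K / r s ^ 2) s)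
    (hT : ∫ s in (0:ℝ)..T, |K| / r s ^ 2 = π) (hTt : T < t) : π < |θ t - θ 0| := by
  set g : ℝ → ℝ := fun s => (r s ^ 2)⁻¹
  have hg : Continuous g := (hr.pow 2).inv₀ fun s => pow_ne_zero 2 (hr_pos s).ne'
  have hmul : ∀ (k a b : ℝ), ∫ s in a..b, k / r s ^ 2 = k * ∫ s in a..b, g s := fun k a b => by
    simp only [g, div_eq_mul_inv, intervalIntegral.integral_const_mul]
  have hθt : θ t - θ 0 = K * ∫ s in (0:ℝ)..t, g s := by
    rw [← hmul, intervalIntegral.integral_eq_sub_of_hasDerivAt (fun s _ => hθ s)]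
    exact (continuous_const.div (hr.pow 2) fun s => pow_ne_zero 2 (hr_pos s).ne').intervalIntegrable 0 t
  have hgrow : ∫ s in (0:ℝ)..T, g s < ∫ s in (0:ℝ)..t, g s := by
    rw [← intervalIntegral.integral_add_adjacent_intervals (hg.intervalIntegrable 0 T)
      (hg.intervalIntegrable T t), lt_add_iff_pos_right]
    exact intervalIntegral.intervalIntegral_pos_of_pos_on (hg.intervalIntegrable T t)
      (fun s _ => inv_pos.2 (pow_pos (hr_pos s) 2)) hTt
  rw [hmul] at hT
  calc π = |K| * ∫ s in (0:ℝ)..T, g s := hT.symm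
    _ < |K| * ∫ s in (0:ℝ)..t, g s := mul_lt_mul_of_pos_left hgrow (abs_pos.2 hK)
    _ ≤ |θ t - θ 0| := by rw [hθt, abs_mul]; gcongr; exact le_abs_self _

theorem exists_abs_lt_one_coe_mul_eq {D : ℝ} (hD : π < |D|) :
    ∃ l : ℝ, |l| < 1 ∧ ((l * D : ℝ) : Real.Angle) = D := by
  have hD0 : D ≠ 0 := by rintro rfl; rw [abs_zero] at hD; linarith [pi_pos]
  rcases hD0.lt_or_gt with hneg | hpos
  · rw [abs_of_neg hneg] at hD
    refine ⟨(D + 2 * π) / D, ?_, ?_⟩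
    · rw [abs_div, div_lt_one (abs_pos.2 hD0), abs_of_neg hneg, abs_lt]
      constructor <;> linarith [pi_pos]
    · rw [div_mul_cancel₀ _ hD0, Real.Angle.coe_add, Real.Angle.coe_two_pi, add_zero]
  · rw [abs_of_pos hpos] at hD
    refine ⟨(D - 2 * π) / D, ?_, ?_⟩
    · rw [abs_div, div_lt_one (abs_pos.2 hD0), abs_of_pos hpos, abs_lt]
      constructor <;> linarith [pi_pos]
    · rw [div_mul_cancel₀ _ hD0, Real.Angle.coe_sub, Real.Angle.coe_two_pi, sub_zero]

theorem dCC_polarCurve_lt {f r r' θ z : ℝ → ℝ} {K w c t : ℝ} (hf : ContinuousOn f (Set.Ioi 0))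
    (hK : K ≠ 0) (hr_pos : ∀ s, 0 < r s) (hr : ∀ s, HasDerivAt r (r' s) s)
    (hr' : Continuous r') (hθ : ∀ s, HasDerivAt θ (K / r s ^ 2) s)
    (hz : ∀ s, HasDerivAt z (w * f (r s) ^ 2) s)
    (hE : ∀ s, radialEnergy f K w (r s) (r' s) = c ^ 2) (hc : 0 ≤ c) (ht : 0 < t)
    (hwind : π < |θ t - θ 0|) :
    dCC f (polarCurve r θ z 0) (polarCurve r θ z t) < c * t := by
  obtain ⟨l, hl, hlD⟩ := exists_abs_lt_one_coe_mul_eq hwind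
  set θl : ℝ → ℝ := fun s => θ 0 + l * (θ s - θ 0)
  set ω : ℝ → ℝ := fun s => l * (K / r s ^ 2)
  set v : ℝ → ℝ := fun s => w * f (r s)
  have hrc : Continuous r := continuous_iff_continuousAt.2 fun s => (hr s).continuousAt
  have hθl : ∀ s, HasDerivAt θl (ω s) s := fun s =>
    (((hθ s).sub_const (θ 0)).const_mul l).const_add (θ 0)
  have hω : Continuous ω :=
    continuous_const.mul (continuous_const.div (hrc.pow 2) fun s => pow_ne_zero 2 (hr_pos s).ne')
  have hv : Continuous v := continuous_const.mul (hf.comp_continuous hrc hr_pos)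
  have hadm : IsAdmissiblePair f t (polarCurve r θl z) (polarControl r θl r' ω v) :=
    isAdmissiblePair_polarCurve ht.le hr hθl (fun s => (hz s).congr_deriv (by ring))
      (fun s => (hr_pos s).le) hr' hω hv (hv.mul (hf.comp_continuous hrc hr_pos))
  have hspeed : ∀ s, ctrlNorm (polarControl r θl r' ω v s) < c := fun s => by
    have hrs := (hr_pos s).ne'
    have hω_sq : (r s * ω s) ^ 2 = l ^ 2 * (K ^ 2 / r s ^ 2) := by simp only [ω]; field_simp
    have hl_sq : l ^ 2 < 1 := (sq_lt_one_iff_abs_lt_one l).2 hl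
    have hK_sq : 0 < K ^ 2 / r s ^ 2 := by positivity
    rw [ctrlNorm_polarControl, Real.sqrt_lt (by positivity) hc, ← hE s, radialEnergy, hω_sq]
    nlinarith
  have hstart : polarCurve r θl z 0 = polarCurve r θ z 0 := by simp [θl, polarCurve]
  have hend : polarCurve r θl z t = polarCurve r θ z t := polarCurve_eq_of_coe_eq <| by
    simp only [θl]; rw [Real.Angle.coe_add, hlD, ← Real.Angle.coe_add, add_sub_cancel]
  have hnorm : Continuous fun s => ctrlNorm (polarControl r θl r' ω v s) := by
    simp only [ctrlNorm_polarControl]; fun_prop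
  rw [← hstart, ← hend]
  exact (dCC_le_pairLength hadm).trans_lt (pairLength_lt_mul ht hnorm hspeed)

theorem not_minimizing_past_symmetry_time_general
    (f : ℝ → ℝ) (hf : MemF f)
    (x₀ y₀ u₀ v₀ w₀ : ℝ)
    (K L : ℝ) (hK : K = x₀ * v₀ - y₀ * u₀) (hL : L = x₀ * u₀ + y₀ * v₀) (hKne : K ≠ 0)
    (r θ z r' : ℝ → ℝ)
    (hrpos : ∀ t, 0 < r t)
    (hr : ∀ t, HasDerivAt r (r' t) t)
    (hr' : ∀ t, HasDerivAt r'
      (-(w₀ ^ 2) * f (r t) * deriv f (r t) + K ^ 2 / r t ^ 3) t)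
    (hθ : ∀ t, HasDerivAt θ (K / r t ^ 2) t)
    (hz : ∀ t, HasDerivAt z (w₀ * f (r t) ^ 2) t)
    (hr0 : r 0 = Real.sqrt (x₀ ^ 2 + y₀ ^ 2))
    (hr'0 : r' 0 = L / Real.sqrt (x₀ ^ 2 + y₀ ^ 2))
    (c : ℝ)
    (hc : c = Real.sqrt (u₀ ^ 2 + v₀ ^ 2 + f (Real.sqrt (x₀ ^ 2 + y₀ ^ 2)) ^ 2 * w₀ ^ 2))
    (γ : ℝ → ℝ × ℝ × ℝ)
    (hγ : ∀ t, γ t = (r t * Real.cos (θ t), r t * Real.sin (θ t), z t))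
    (T : ℝ) (hTpos : 0 < T)
    (hTeq : (∫ s in (0:ℝ)..T, |K| / r s ^ 2) = Real.pi) :
    (∀ t : ℝ, T < t → dCC f (γ 0) (γ t) < c * t) ∧
    sSup {t : ℝ | 0 < t ∧ dCC f (γ 0) (γ t) = c * t} ≤ T := by
  have hfd : DifferentiableOn ℝ f (Set.Ioi 0) := hf.smooth.differentiableOn (by norm_num)
  have hE : ∀ s, radialEnergy f K w₀ (r s) (r' s) = c ^ 2 := fun s => by
    rw [radialEnergy_eq_initial hfd hrpos hr hr' s, hr0, hr'0, hK, hL,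
      radialEnergy_polar f _ _ _ _ _ (hr0 ▸ (hrpos 0).ne'), hc, Real.sq_sqrt (by positivity)]
  have hlt : ∀ t, T < t → dCC f (γ 0) (γ t) < c * t := fun t hTt => by
    rw [show γ = polarCurve r θ z from funext hγ]
    exact dCC_polarCurve_lt hfd.continuousOn hKne hrpos hr
      (continuous_iff_continuousAt.2 fun s => (hr' s).continuousAt) hθ hz hE
      (hc ▸ Real.sqrt_nonneg _) (hTpos.trans hTt)
      (pi_lt_abs_sub_of_integral_eq_pi hKne
        (continuous_iff_continuousAt.2 fun s => (hr s).continuousAt) hrpos hθ hTeq hTt)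
  refine ⟨hlt, Real.sSup_le (fun t ⟨_, ht⟩ => ?_) hTpos.le⟩
  by_contra! hTt
  exact (hlt t hTt).ne ht

/-- a constant speed geodesic from a Riemannian point with
angular momentum `K ≠ 0` is not a length minimizer on `[0,t]` for any `t > T`,
where `T` is the first time with `∫₀ᵀ |K|/r² = π`; in particular `t_cut(γ) ≤ T`. -/
theorem not_minimizing_past_symmetry_time
    (f : ℝ → ℝ) (hf : MemF f)
    (x₀ y₀ z₀ u₀ v₀ w₀ : ℝ) (hq : 0 < x₀ ^ 2 + y₀ ^ 2)
    (θ₀ : ℝ)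
    (hx₀ : x₀ = Real.sqrt (x₀ ^ 2 + y₀ ^ 2) * Real.cos θ₀)
    (hy₀ : y₀ = Real.sqrt (x₀ ^ 2 + y₀ ^ 2) * Real.sin θ₀)
    (K L : ℝ) (hK : K = x₀ * v₀ - y₀ * u₀) (hL : L = x₀ * u₀ + y₀ * v₀) (hKne : K ≠ 0)
    (r θ z r' : ℝ → ℝ)
    (hrpos : ∀ t, 0 < r t)
    (hr : ∀ t, HasDerivAt r (r' t) t)
    (hr' : ∀ t, HasDerivAt r'
      (-(w₀ ^ 2) * f (r t) * deriv f (r t) + K ^ 2 / r t ^ 3) t)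
    (hθ : ∀ t, HasDerivAt θ (K / r t ^ 2) t)
    (hz : ∀ t, HasDerivAt z (w₀ * f (r t) ^ 2) t)
    (hr0 : r 0 = Real.sqrt (x₀ ^ 2 + y₀ ^ 2))
    (hr'0 : r' 0 = L / Real.sqrt (x₀ ^ 2 + y₀ ^ 2))
    (hθ0 : θ 0 = θ₀) (hz0 : z 0 = z₀)
    (c : ℝ)
    (hc : c = Real.sqrt (u₀ ^ 2 + v₀ ^ 2 + f (Real.sqrt (x₀ ^ 2 + y₀ ^ 2)) ^ 2 * w₀ ^ 2))
    (γ : ℝ → ℝ × ℝ × ℝ)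
    (hγ : ∀ t, γ t = (r t * Real.cos (θ t), r t * Real.sin (θ t), z t))
    (T : ℝ) (hTpos : 0 < T)
    (hTeq : (∫ s in (0:ℝ)..T, |K| / r s ^ 2) = Real.pi) :
    (∀ t : ℝ, T < t → dCC f (γ 0) (γ t) < c * t) ∧
    sSup {t : ℝ | 0 < t ∧ dCC f (γ 0) (γ t) = c * t} ≤ T :=
  not_minimizing_past_symmetry_time_general f hf x₀ y₀ u₀ v₀ w₀ K L hK hL hKne r θ z r' hrpos hr hr'
    hθ hz hr0 hr'0 c hc γ hγ T hTpos hTeq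
end
end

section
/- Let γ be the unit-speed straight-line geodesic from q₀=(x₀,y₀,z₀) with initial covector λ₀=(u₀,v₀,0), so γ(t)=(x₀+u₀t, y₀+v₀t, z₀). If v₀≠0, the Jacobian determinant of the exponential map in the coordinates (t,u₀,w₀) equals −(t/v₀)·∫₀^t f(r(s;u₀,v₀,0))² ds, and if u₀≠0, the Jacobian determinant in the coordinates (t,v₀,w₀) equals (t/u₀)·∫₀^t f(r(s;u₀,v₀,0))² ds. In particular these determinants are nonzero for all t>0, so the straight-line geodesics have no conjugate points. -/
/-!
For `w₀ = 0` the Hamiltonian system keeps `(u, v)` constant, so on the plane `w₀ = 0` the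
exponential map is the translation `(x, y, 0) ↦ (x₀ + x, y₀ + y, z₀)`. This gives the first two
columns of the Jacobian, whose `z`-entries vanish, so the determinant factors through `∂z/∂w₀`.
Integrating `ż = f(r)² w₀` gives `z = z₀ + w₀ ∫₀ᵗ f(r(s; w₀))² ds`, whence
`∂z/∂w₀ = ∫₀ᵗ f(r(s))² ds` along the straight line; this is positive since the line meets the
axis `r = 0` at most once.
-/

noncomputable section

/-- `γ` is a normal geodesic with initial covector `λ₀ = (u₀,v₀,w₀)`, i.e. the projection
of a solution of the Hamiltonian system of `H_f`; `φ` is the continuous extension of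
`f(r)f'(r)/r`. -/
def IsNormalGeodesic (f φ : ℝ → ℝ) (γ : ℝ → ℝ × ℝ × ℝ) (lam : ℝ × ℝ × ℝ) : Prop :=
  ∃ u v : ℝ → ℝ, u 0 = lam.1 ∧ v 0 = lam.2.1 ∧
    (∀ t, HasDerivAt (fun s => (γ s).1) (u t) t) ∧
    (∀ t, HasDerivAt (fun s => (γ s).2.1) (v t) t) ∧
    (∀ t, HasDerivAt (fun s => (γ s).2.2) (f (rad (γ t)) ^ 2 * lam.2.2) t) ∧
    (∀ t, HasDerivAt u (-(lam.2.2 ^ 2) * φ (rad (γ t)) * (γ t).1) t) ∧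
    (∀ t, HasDerivAt v (-(lam.2.2 ^ 2) * φ (rad (γ t)) * (γ t).2.1) t)

/-- The Jacobian determinant of a three–parameter family `F(t,a,b)` of points of `ℝ³`,
computed from partial derivatives. -/
def jac3 (F : ℝ → ℝ → ℝ → ℝ × ℝ × ℝ) (t a b : ℝ) : ℝ :=
  Matrix.det
    !![deriv (fun τ => (F τ a b).1) t, deriv (fun x => (F t x b).1) a,
         deriv (fun x => (F t a x).1) b;
       deriv (fun τ => (F τ a b).2.1) t, deriv (fun x => (F t x b).2.1) a,
         deriv (fun x => (F t a x).2.1) b;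
       deriv (fun τ => (F τ a b).2.2) t, deriv (fun x => (F t x b).2.2) a,
         deriv (fun x => (F t a x).2.2) b]

open Set

lemma eq_add_mul_of_hasDerivAt_const {g : ℝ → ℝ} {c : ℝ} (hg : ∀ t, HasDerivAt g c t) (t : ℝ) :
    g t = g 0 + c * t := by
  have := intervalIntegral.integral_eq_sub_of_hasDerivAt (fun s _ => hg s)
    (intervalIntegrable_const (c := c) (a := 0) (b := t))
  simp only [intervalIntegral.integral_const, sub_zero, smul_eq_mul] at this
  linarith

lemma hasDerivAt_of_eq_add_mul {h G : ℝ → ℝ} {x : ℝ} (hG : ContinuousAt G x)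
    (hh : ∀ w, h w = h x + (w - x) * G w) : HasDerivAt h (G x) x := by
  rw [hasDerivAt_iff_tendsto_slope]
  refine (hG.tendsto.mono_left nhdsWithin_le_nhds).congr' ?_
  filter_upwards [self_mem_nhdsWithin] with w (hw : w ≠ x)
  rw [slope_def_field, hh w, add_sub_cancel_left, mul_div_cancel_left₀ _ (sub_ne_zero.2 hw)]

lemma HasDerivAt.comp_of_tangent {E F : Type*} [NormedAddCommGroup E] [NormedSpace ℝ E]
    [NormedAddCommGroup F] [NormedSpace ℝ F] {g : E → F} {κ ι : ℝ → E} {x : ℝ} {v : E} {I : F}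
    (hg : DifferentiableAt ℝ g (ι x)) (hκ : HasDerivAt κ v x) (hι : HasDerivAt ι v x)
    (hκι : κ x = ι x) (hI : HasDerivAt (g ∘ ι) I x) : HasDerivAt (g ∘ κ) I x := by
  have hv : fderiv ℝ g (ι x) v = I := (hg.hasFDerivAt.comp_hasDerivAt x hι).unique hI
  rw [← hκι] at hg
  simpa [hκι, hv] using hg.hasFDerivAt.comp_hasDerivAt x hκ

namespace IsNormalGeodesic

variable {f φ : ℝ → ℝ} {γ : ℝ → ℝ × ℝ × ℝ} {lam : ℝ × ℝ × ℝ} {a b : ℝ}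

lemma continuous (h : IsNormalGeodesic f φ γ lam) : Continuous γ := by
  obtain ⟨u, v, -, -, hx, hy, hz, -, -⟩ := h
  refine .prodMk ?_ (.prodMk ?_ ?_) <;> refine continuous_iff_continuousAt.2 fun t => ?_
  exacts [(hx t).continuousAt, (hy t).continuousAt, (hz t).continuousAt]

lemma snd_snd_eq (h : IsNormalGeodesic f φ γ lam) (hf : ContinuousOn f (Ici 0)) (t : ℝ) :
    (γ t).2.2 = (γ 0).2.2 + lam.2.2 * ∫ s in (0:ℝ)..t, f (rad (γ s)) ^ 2 := by
  have hγ := h.continuous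
  have hfγ : Continuous fun s => f (rad (γ s)) :=
    hf.comp_continuous (by unfold rad; fun_prop) fun s => Real.sqrt_nonneg _
  obtain ⟨u, v, -, -, -, -, hz, -, -⟩ := h
  have := intervalIntegral.integral_eq_sub_of_hasDerivAt (fun s _ => hz s)
    (((hfγ.pow 2).mul continuous_const).intervalIntegrable 0 t)
  rw [intervalIntegral.integral_mul_const] at this
  linarith

lemma eq_line (h : IsNormalGeodesic f φ γ (a, b, 0)) (t : ℝ) :
    γ t = ((γ 0).1 + a * t, (γ 0).2.1 + b * t, (γ 0).2.2) := by
  obtain ⟨u, v, hu0, hv0, hx, hy, hz, hdu, hdv⟩ := h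
  simp only [zero_pow two_ne_zero, neg_zero, zero_mul, mul_zero] at hz hdu hdv
  have hu : ∀ s, u s = a := fun s => by simpa [hu0] using eq_add_mul_of_hasDerivAt_const hdu s
  have hv : ∀ s, v s = b := fun s => by simpa [hv0] using eq_add_mul_of_hasDerivAt_const hdv s
  simp only [hu, hv] at hx hy
  ext
  exacts [eq_add_mul_of_hasDerivAt_const hx t, eq_add_mul_of_hasDerivAt_const hy t,
    by simpa using eq_add_mul_of_hasDerivAt_const hz t]

end IsNormalGeodesic

section ExponentialMap

variable {f φ : ℝ → ℝ} {E : ℝ × ℝ × ℝ → ℝ × ℝ × ℝ} {x₀ y₀ z₀ : ℝ}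

lemma exp_eq_of_w_eq_zero (hE0 : E 0 = (x₀, y₀, z₀))
    (hgeo : ∀ lam, IsNormalGeodesic f φ (fun t => E (t • lam)) lam) (x y : ℝ) :
    E (x, y, 0) = (x₀ + x, y₀ + y, z₀) := by
  simpa [hE0] using (hgeo (x, y, 0)).eq_line 1

lemma hasDerivAt_exp_snd_snd (hf : ContinuousOn f (Ici 0)) (hE : Continuous E)
    (hE0 : E 0 = (x₀, y₀, z₀)) (hgeo : ∀ lam, IsNormalGeodesic f φ (fun t => E (t • lam)) lam)
    (u₀ v₀ t : ℝ) :
    HasDerivAt (fun w => (E (t * u₀, t * v₀, t * w)).2.2)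
      (∫ s in (0:ℝ)..t, f (√((x₀ + u₀ * s) ^ 2 + (y₀ + v₀ * s) ^ 2)) ^ 2) 0 := by
  set G : ℝ → ℝ := fun w => ∫ s in (0:ℝ)..t, f (rad (E (s • (u₀, v₀, w)))) ^ 2
  have hG : Continuous G :=
    intervalIntegral.continuous_parametric_intervalIntegral_of_continuous'
      ((hf.comp_continuous (by fun_prop) fun _ => Real.sqrt_nonneg _).pow 2) 0 t
  have hG0 : G 0 = ∫ s in (0:ℝ)..t, f (√((x₀ + u₀ * s) ^ 2 + (y₀ + v₀ * s) ^ 2)) ^ 2 := by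
    simp [G, exp_eq_of_w_eq_zero hE0 hgeo, rad, mul_comm]
  have hz (w : ℝ) : (E (t * u₀, t * v₀, t * w)).2.2 = z₀ + w * G w := by
    simpa [hE0, G] using (hgeo (u₀, v₀, w)).snd_snd_eq hf t
  rw [← hG0]
  refine hasDerivAt_of_eq_add_mul hG.continuousAt fun w => ?_
  rw [hz, hz]
  ring

end ExponentialMap

lemma jac3_eq_of_hasDerivAt {F : ℝ → ℝ → ℝ → ℝ × ℝ × ℝ} {t a b a₁₁ a₁₂ a₂₁ a₂₂ a₃₃ : ℝ}
    (h₁₁ : HasDerivAt (fun τ => (F τ a b).1) a₁₁ t)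
    (h₁₂ : HasDerivAt (fun x => (F t x b).1) a₁₂ a)
    (h₂₁ : HasDerivAt (fun τ => (F τ a b).2.1) a₂₁ t)
    (h₂₂ : HasDerivAt (fun x => (F t x b).2.1) a₂₂ a)
    (h₃₁ : HasDerivAt (fun τ => (F τ a b).2.2) 0 t)
    (h₃₂ : HasDerivAt (fun x => (F t x b).2.2) 0 a)
    (h₃₃ : HasDerivAt (fun x => (F t a x).2.2) a₃₃ b) :
    jac3 F t a b = a₃₃ * (a₁₁ * a₂₂ - a₁₂ * a₂₁) := by
  rw [jac3, Matrix.det_fin_three]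
  simp only [Matrix.of_apply, Matrix.cons_val', Matrix.cons_val_zero, Matrix.cons_val_one,
    Matrix.cons_val_two, Matrix.empty_val', Matrix.cons_val_fin_one, Matrix.tail_cons,
    Matrix.vecHead, h₁₁.deriv, h₁₂.deriv, h₂₁.deriv, h₂₂.deriv, h₃₁.deriv, h₃₂.deriv, h₃₃.deriv]
  ring

def swapXY (q : ℝ × ℝ × ℝ) : ℝ × ℝ × ℝ := (q.2.1, q.1, q.2.2)

lemma jac3_swapXY (F : ℝ → ℝ → ℝ → ℝ × ℝ × ℝ) (t a b : ℝ) :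
    jac3 (fun τ a b => swapXY (F τ a b)) t a b = -jac3 F t a b := by
  simp only [jac3, swapXY, Matrix.det_fin_three, Matrix.of_apply, Matrix.cons_val',
    Matrix.cons_val_zero, Matrix.cons_val_one, Matrix.cons_val_two, Matrix.empty_val',
    Matrix.cons_val_fin_one, Matrix.head_cons, Matrix.tail_cons]
  ring

lemma hasDerivAt_mul_sign_mul_sqrt_one_sub_sq {σ u₀ v₀ : ℝ} (hσ : σ * √(1 - u₀ ^ 2) = v₀)
    (hv : v₀ ≠ 0) (hunit : u₀ ^ 2 + v₀ ^ 2 = 1) (t : ℝ) :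
    HasDerivAt (fun a => t * (σ * √(1 - a ^ 2))) (-(t * u₀ / v₀)) u₀ := by
  have h₁ : 1 - u₀ ^ 2 = v₀ ^ 2 := by linarith
  have hs : √(1 - u₀ ^ 2) ≠ 0 := by rw [h₁, Real.sqrt_sq_eq_abs]; positivity
  have hσ' : σ = v₀ / √(1 - u₀ ^ 2) := by rw [← hσ, mul_div_cancel_right₀ _ hs]
  refine ((((Real.hasDerivAt_sqrt (by rw [h₁]; positivity)).comp u₀
    ((hasDerivAt_pow 2 u₀).const_sub 1)).const_mul σ).const_mul t).congr_deriv ?_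
  have hsq : √(1 - u₀ ^ 2) ^ 2 = v₀ ^ 2 := by rw [Real.sq_sqrt (by rw [h₁]; positivity), h₁]
  rw [hσ']
  field_simp
  rw [hsq]
  ring

lemma jac3_chart {E : ℝ × ℝ × ℝ → ℝ × ℝ × ℝ} {x₀ y₀ z₀ σ u₀ v₀ t I : ℝ}
    (hplane : ∀ x y, E (x, y, 0) = (x₀ + x, y₀ + y, z₀))
    (hE : DifferentiableAt ℝ E (t * u₀, t * v₀, 0))
    (hunit : u₀ ^ 2 + v₀ ^ 2 = 1) (hσ : σ * √(1 - u₀ ^ 2) = v₀) (hv : v₀ ≠ 0) (c : ℝ)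
    (hI : HasDerivAt (fun w => (E (t * u₀, t * v₀, t * w)).2.2) I 0) :
    jac3 (fun τ a b => E (τ * a, τ * (σ * √(1 - a ^ 2 - c * b ^ 2)), τ * b)) t u₀ 0
      = -(t / v₀) * I := by
  have hslice : ∀ τ a, E (τ * a, τ * (σ * √(1 - a ^ 2 - c * 0 ^ 2)), τ * 0)
      = (x₀ + τ * a, y₀ + τ * (σ * √(1 - a ^ 2)), z₀) := by
    simp [hplane]
  have hid : HasDerivAt (fun b => t * b) t 0 := by simpa using (hasDerivAt_id 0).const_mul t
  -- the square root is even in `b`, so this curve is tangent to `w ↦ (t u₀, t v₀, t w)` at `0`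
  have hcurve : HasDerivAt (fun b => (t * u₀, t * (σ * √(1 - u₀ ^ 2 - c * b ^ 2)), t * b))
      ((0 : ℝ), (0 : ℝ), t) 0 := by
    have hne : 1 - u₀ ^ 2 - c * 0 ^ 2 ≠ 0 := by
      rw [show 1 - u₀ ^ 2 - c * 0 ^ 2 = v₀ ^ 2 by linear_combination -hunit]; positivity
    have hsqrt := (((Real.hasDerivAt_sqrt hne).comp 0
      (((hasDerivAt_pow 2 0).const_mul c).const_sub (1 - u₀ ^ 2))).const_mul σ).const_mul t
    simp only [Nat.add_one_sub_one, pow_one, mul_zero, neg_zero] at hsqrt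
    exact (hasDerivAt_const _ _).prodMk (hsqrt.prodMk hid)
  have hline : HasDerivAt (fun w => (t * u₀, t * v₀, t * w)) ((0 : ℝ), (0 : ℝ), t) 0 :=
    (hasDerivAt_const _ _).prodMk ((hasDerivAt_const _ _).prodMk hid)
  rw [jac3_eq_of_hasDerivAt (a₁₁ := u₀) (a₂₁ := v₀) (a₁₂ := t) (a₂₂ := -(t * u₀ / v₀))
    (a₃₃ := I)]
  · field_simp
    linear_combination (-(t * I)) * hunit
  · simp only [hslice]; simpa using ((hasDerivAt_id t).mul_const u₀).const_add x₀
  · simp only [hslice]; simpa using ((hasDerivAt_id u₀).const_mul t).const_add x₀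
  · simp only [hslice]; simpa [hσ] using ((hasDerivAt_id t).mul_const _).const_add y₀
  · simp only [hslice]
    exact (hasDerivAt_mul_sign_mul_sqrt_one_sub_sq hσ hv hunit t).const_add y₀
  · simp only [hslice]; exact hasDerivAt_const _ _
  · simp only [hslice]; exact hasDerivAt_const _ _
  · exact HasDerivAt.comp_of_tangent (g := fun q => (E q).2.2) (by simpa using hE.snd.snd)
      hcurve hline (by simp [hσ]) hI

lemma jac3_chart_swapXY {E : ℝ × ℝ × ℝ → ℝ × ℝ × ℝ} {x₀ y₀ z₀ σ u₀ v₀ t I : ℝ}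
    (hplane : ∀ x y, E (x, y, 0) = (x₀ + x, y₀ + y, z₀))
    (hE : DifferentiableAt ℝ E (t * u₀, t * v₀, 0))
    (hunit : u₀ ^ 2 + v₀ ^ 2 = 1) (hσ : σ * √(1 - v₀ ^ 2) = u₀) (hu : u₀ ≠ 0) (c : ℝ)
    (hI : HasDerivAt (fun w => (E (t * u₀, t * v₀, t * w)).2.2) I 0) :
    jac3 (fun τ a b => E (τ * (σ * √(1 - a ^ 2 - c * b ^ 2)), τ * a, τ * b)) t v₀ 0
      = t / u₀ * I := by
  have hswap : Differentiable ℝ swapXY := by unfold swapXY; fun_prop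
  have h := jac3_chart (E := swapXY ∘ E ∘ swapXY) (x₀ := y₀) (y₀ := x₀) (z₀ := z₀)
    (fun x y => by simp [swapXY, hplane])
    (hswap.differentiableAt.comp _ (hE.comp (t * v₀, t * u₀, 0) hswap.differentiableAt))
    (by linarith) hσ hu c hI
  have hconj : (fun τ a b => E (τ * (σ * √(1 - a ^ 2 - c * b ^ 2)), τ * a, τ * b)) = fun τ a b =>
      swapXY ((swapXY ∘ E ∘ swapXY) (τ * a, τ * (σ * √(1 - a ^ 2 - c * b ^ 2)), τ * b)) := rfl
  rw [hconj, jac3_swapXY, h]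
  ring

lemma integral_sq_comp_dist_line_pos {f : ℝ → ℝ} (hf : ContinuousOn f (Ici 0))
    (hpos : ∀ r, 0 < r → 0 < f r) {x₀ y₀ u₀ v₀ t : ℝ} (huv : u₀ ≠ 0 ∨ v₀ ≠ 0) (ht : 0 < t) :
    0 < ∫ s in (0:ℝ)..t, f (√((x₀ + u₀ * s) ^ 2 + (y₀ + v₀ * s) ^ 2)) ^ 2 := by
  have hcont : Continuous fun s => f (√((x₀ + u₀ * s) ^ 2 + (y₀ + v₀ * s) ^ 2)) ^ 2 :=
    (hf.comp_continuous (by fun_prop) fun _ => Real.sqrt_nonneg _).pow 2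
  refine intervalIntegral.integral_pos ht hcont.continuousOn (fun s _ => sq_nonneg _) ?_
  -- a line meets the `z`-axis at most once, so one of the endpoints lies off it
  obtain ⟨s, hs, hne⟩ : ∃ s ∈ Icc 0 t, (x₀ + u₀ * s) * (x₀ + u₀ * s)
      + (y₀ + v₀ * s) * (y₀ + v₀ * s) ≠ 0 := by
    by_contra! h
    obtain ⟨hx, hy⟩ := mul_self_add_mul_self_eq_zero.1 (h 0 (left_mem_Icc.2 ht.le))
    obtain ⟨hu, hv⟩ := mul_self_add_mul_self_eq_zero.1 (h t (right_mem_Icc.2 ht.le))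
    simp only [mul_zero, add_zero] at hx hy
    simp only [hx, hy, zero_add, mul_eq_zero, ht.ne', or_false] at hu hv
    tauto
  refine ⟨s, hs, pow_pos (hpos _ (Real.sqrt_pos.2 ?_)) 2⟩
  simp only [sq]
  exact (add_nonneg (mul_self_nonneg _) (mul_self_nonneg _)).lt_of_ne' hne

lemma ite_pos_mul_sqrt_one_sub_sq {u v : ℝ} (h : u ^ 2 + v ^ 2 = 1) :
    (if 0 < v then (1 : ℝ) else -1) * √(1 - u ^ 2) = v := by
  rw [show 1 - u ^ 2 = v ^ 2 by linarith, Real.sqrt_sq_eq_abs]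
  split_ifs with hv
  · rw [one_mul, abs_of_pos hv]
  · rw [abs_of_nonpos (not_lt.1 hv), neg_one_mul, neg_neg]

theorem straight_line_jacobian_no_conjugate_general
    (f : ℝ → ℝ) (hf : MemF f)
    (φ : ℝ → ℝ)
    (x₀ y₀ z₀ : ℝ)
    (E : ℝ × ℝ × ℝ → ℝ × ℝ × ℝ)
    (hsm : ContDiff ℝ 1 E)
    (hE0 : E 0 = (x₀, y₀, z₀))
    (hgeo : ∀ lam : ℝ × ℝ × ℝ, IsNormalGeodesic f φ (fun t => E (t • lam)) lam)
    (u₀ v₀ : ℝ) (hunit : u₀ ^ 2 + v₀ ^ 2 = 1)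
    (r₀ : ℝ) :
    ((v₀ ≠ 0 → ∀ t : ℝ,
      jac3 (fun τ a b => E (τ * a,
          τ * ((if 0 < v₀ then (1:ℝ) else -1) * Real.sqrt (1 - a ^ 2 - f r₀ ^ 2 * b ^ 2)),
          τ * b)) t u₀ 0
        = -(t / v₀) *
            ∫ s in (0:ℝ)..t, f (Real.sqrt ((x₀ + u₀ * s) ^ 2 + (y₀ + v₀ * s) ^ 2)) ^ 2) ∧
    (u₀ ≠ 0 → ∀ t : ℝ,
      jac3 (fun τ a b => E (
          τ * ((if 0 < u₀ then (1:ℝ) else -1) * Real.sqrt (1 - a ^ 2 - f r₀ ^ 2 * b ^ 2)),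
          τ * a, τ * b)) t v₀ 0
        = (t / u₀) *
            ∫ s in (0:ℝ)..t, f (Real.sqrt ((x₀ + u₀ * s) ^ 2 + (y₀ + v₀ * s) ^ 2)) ^ 2)) ∧
    (∀ t : ℝ, 0 < t →
      (v₀ ≠ 0 →
        jac3 (fun τ a b => E (τ * a,
            τ * ((if 0 < v₀ then (1:ℝ) else -1) * Real.sqrt (1 - a ^ 2 - f r₀ ^ 2 * b ^ 2)),
            τ * b)) t u₀ 0 ≠ 0) ∧
      (u₀ ≠ 0 →
        jac3 (fun τ a b => E (
            τ * ((if 0 < u₀ then (1:ℝ) else -1) * Real.sqrt (1 - a ^ 2 - f r₀ ^ 2 * b ^ 2)),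
            τ * a, τ * b)) t v₀ 0 ≠ 0)) := by
  have hE : Differentiable ℝ E := hsm.differentiable one_ne_zero
  have hplane := exp_eq_of_w_eq_zero hE0 hgeo
  have hI := hasDerivAt_exp_snd_snd hf.cont hE.continuous hE0 hgeo u₀ v₀
  have chart₁ := fun (hv : v₀ ≠ 0) t => jac3_chart hplane (hE _) hunit
    (ite_pos_mul_sqrt_one_sub_sq hunit) hv (f r₀ ^ 2) (hI t)
  have chart₂ := fun (hu : u₀ ≠ 0) t => jac3_chart_swapXY hplane (hE _) hunit
    (ite_pos_mul_sqrt_one_sub_sq (by linarith)) hu (f r₀ ^ 2) (hI t)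
  have huv : u₀ ≠ 0 ∨ v₀ ≠ 0 := by
    by_contra! h
    simp [h] at hunit
  refine ⟨⟨chart₁, chart₂⟩, fun t ht => ?_⟩
  have hpos := integral_sq_comp_dist_line_pos hf.cont hf.pos (x₀ := x₀) (y₀ := y₀) huv ht
  exact ⟨fun hv => by rw [chart₁ hv]; exact mul_ne_zero (by simp [ht.ne', hv]) hpos.ne',
    fun hu => by rw [chart₂ hu]; exact mul_ne_zero (by simp [ht.ne', hu]) hpos.ne'⟩

/-- along the unit-speed straight-line geodesics (`w₀ = 0`), the
Jacobian determinant of the exponential map in the chart `(t,u₀,w₀)` (for `v₀ ≠ 0`,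
where `v = sign(v₀)√(1−u²−f(r₀)²w²)` on the unit shell) equals
`−(t/v₀)·∫₀ᵗ f(r(s))² ds`, and in the chart `(t,v₀,w₀)` (for `u₀ ≠ 0`) it equals
`(t/u₀)·∫₀ᵗ f(r(s))² ds`; in particular straight-line geodesics have no conjugate
points. -/
theorem straight_line_jacobian_no_conjugate
    (f : ℝ → ℝ) (hf : MemF f)
    (φ : ℝ → ℝ) (hφc : ContinuousOn φ (Set.Ici 0))
    (hφeq : ∀ r : ℝ, 0 < r → φ r = f r * deriv f r / r)
    (x₀ y₀ z₀ : ℝ)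
    (E : ℝ × ℝ × ℝ → ℝ × ℝ × ℝ)
    (hsm : ContDiff ℝ 1 E)
    (hE0 : E 0 = (x₀, y₀, z₀))
    (hgeo : ∀ lam : ℝ × ℝ × ℝ, IsNormalGeodesic f φ (fun t => E (t • lam)) lam)
    (u₀ v₀ : ℝ) (hunit : u₀ ^ 2 + v₀ ^ 2 = 1)
    (r₀ : ℝ) (hr₀ : r₀ = Real.sqrt (x₀ ^ 2 + y₀ ^ 2)) :
    ((v₀ ≠ 0 → ∀ t : ℝ,
      jac3 (fun τ a b => E (τ * a,
          τ * ((if 0 < v₀ then (1:ℝ) else -1) * Real.sqrt (1 - a ^ 2 - f r₀ ^ 2 * b ^ 2)),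
          τ * b)) t u₀ 0
        = -(t / v₀) *
            ∫ s in (0:ℝ)..t, f (Real.sqrt ((x₀ + u₀ * s) ^ 2 + (y₀ + v₀ * s) ^ 2)) ^ 2) ∧
    (u₀ ≠ 0 → ∀ t : ℝ,
      jac3 (fun τ a b => E (
          τ * ((if 0 < u₀ then (1:ℝ) else -1) * Real.sqrt (1 - a ^ 2 - f r₀ ^ 2 * b ^ 2)),
          τ * a, τ * b)) t v₀ 0
        = (t / u₀) *
            ∫ s in (0:ℝ)..t, f (Real.sqrt ((x₀ + u₀ * s) ^ 2 + (y₀ + v₀ * s) ^ 2)) ^ 2)) ∧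
    (∀ t : ℝ, 0 < t →
      (v₀ ≠ 0 →
        jac3 (fun τ a b => E (τ * a,
            τ * ((if 0 < v₀ then (1:ℝ) else -1) * Real.sqrt (1 - a ^ 2 - f r₀ ^ 2 * b ^ 2)),
            τ * b)) t u₀ 0 ≠ 0) ∧
      (u₀ ≠ 0 →
        jac3 (fun τ a b => E (
            τ * ((if 0 < u₀ then (1:ℝ) else -1) * Real.sqrt (1 - a ^ 2 - f r₀ ^ 2 * b ^ 2)),
            τ * a, τ * b)) t v₀ 0 ≠ 0)) :=
  straight_line_jacobian_no_conjugate_general f hf φ x₀ y₀ z₀ E hsm hE0 hgeo u₀ v₀ hunit r₀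
end
end

section
/- Fix 0<r_min<r_max, φ∈(0,π/2), and set w₀ = 1/√(r_min²+r_max²), s = w₀t+φ, r(t) = √(r_min² + (r_max²−r_min²)sin²(s)). Define D(t) = (1/r(t))·[ (w₀³t·(cot(φ)·r_max² − tan(φ)·r_min²) + 2)·sin(s)cos(s) + (−w₀³t·r_max² − tan(φ))·cos²(s) + (w₀³t·r_min² − cot(φ))·sin²(s) ]. Then D(0)=0 and the first strictly positive zero of D is exactly t = π/w₀. -/
/-!
With `u = w₀ t = s - φ`, multiplying the bracket by `sin φ cos φ` makes the `t`-free terms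
collapse to `-sin² u` and the terms linear in `t` to
`sin u · w₀³ t (r_max² cos φ cos s + r_min² sin φ sin s)`.
Expanding `s = u + φ`, the bracket becomes
`sin u · (w₀² A · u cos u - w₀² B · u sin u - sin u) / (sin φ cos φ)` with
`A = r_max² cos² φ + r_min² sin² φ ≤ 1 / w₀²` and `B = (r_max² - r_min²) sin φ cos φ ≥ 0`.
The zeros at `t = 0` and `t = π / w₀` are those of `sin u`; on `0 < u < π` we have `sin u > 0` and
`u cos u < sin u`, so the second factor is negative.
-/

open Real

noncomputable def jacobianBracket (a b φ w t : ℝ) : ℝ :=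
  (w ^ 3 * t * ((cos φ / sin φ) * b ^ 2 - tan φ * a ^ 2) + 2) * sin (w * t + φ) * cos (w * t + φ)
    + (-(w ^ 3 * t * b ^ 2) - tan φ) * cos (w * t + φ) ^ 2
    + (w ^ 3 * t * a ^ 2 - cos φ / sin φ) * sin (w * t + φ) ^ 2

theorem Real.mul_cos_lt_sin {u : ℝ} (h0 : 0 < u) (hπ : u < π) : u * cos u < sin u := by
  have hsin : 0 < sin u := sin_pos_of_pos_of_lt_pi h0 hπ
  rcases le_or_gt (π / 2) u with hu | hu
  · nlinarith [cos_nonpos_of_pi_div_two_le_of_le hu (by linarith)]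
  · have hcos : 0 < cos u := cos_pos_of_mem_Ioo ⟨by linarith, hu⟩
    simpa [tan_eq_sin_div_cos, lt_div_iff₀ hcos] using lt_tan h0 hu

theorem Real.mul_mul_cos_lt_sin {c u : ℝ} (hc0 : 0 ≤ c) (hc1 : c ≤ 1) (h0 : 0 < u) (hπ : u < π) :
    c * (u * cos u) < sin u := by
  have hlt := mul_cos_lt_sin h0 hπ
  have hsin := sin_pos_of_pos_of_lt_pi h0 hπ
  rcases le_or_gt 0 (u * cos u) with h | h <;> nlinarith

theorem sin_mul_cos_mul_jacobianBracket (a b φ w t : ℝ) (hφ : sin φ * cos φ ≠ 0) :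
    sin φ * cos φ * jacobianBracket a b φ w t = sin (w * t) *
      (w ^ 3 * t * (b ^ 2 * cos φ * cos (w * t + φ) + a ^ 2 * sin φ * sin (w * t + φ))
        - sin (w * t)) := by
  obtain ⟨hs, hc⟩ := mul_ne_zero_iff.1 hφ
  have hu : sin (w * t) = sin (w * t + φ) * cos φ - cos (w * t + φ) * sin φ := by
    rw [← sin_sub, add_sub_cancel_right]
  rw [jacobianBracket, hu, tan_eq_sin_div_cos]
  field_simp
  ring

theorem jacobianBracket_eq_zero {a b φ w t : ℝ} (hφ : sin φ * cos φ ≠ 0) (ht : sin (w * t) = 0) :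
    jacobianBracket a b φ w t = 0 := by
  have := sin_mul_cos_mul_jacobianBracket a b φ w t hφ
  rw [ht, zero_mul] at this
  exact (mul_eq_zero.1 this).resolve_left hφ

theorem jacobianBracket_neg {a b φ w t : ℝ} (hφ : 0 < sin φ * cos φ) (hab : a ^ 2 ≤ b ^ 2)
    (hw : w ^ 2 * (a ^ 2 + b ^ 2) ≤ 1) (h0 : 0 < w * t) (hπ : w * t < π) :
    jacobianBracket a b φ w t < 0 := by
  set A := b ^ 2 * cos φ ^ 2 + a ^ 2 * sin φ ^ 2
  have hinner : b ^ 2 * cos φ * cos (w * t + φ) + a ^ 2 * sin φ * sin (w * t + φ)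
      = A * cos (w * t) - (b ^ 2 - a ^ 2) * (sin φ * cos φ) * sin (w * t) := by
    rw [cos_add, sin_add]; ring
  have hA : w ^ 2 * A ≤ 1 := by
    have : A ≤ a ^ 2 + b ^ 2 := by
      nlinarith [sin_sq_add_cos_sq φ, mul_nonneg (sq_nonneg a) (sq_nonneg (cos φ)),
        mul_nonneg (sq_nonneg b) (sq_nonneg (sin φ))]
    nlinarith [sq_nonneg w]
  have hsin : 0 < sin (w * t) := sin_pos_of_pos_of_lt_pi h0 hπ
  have hfactor : w ^ 3 * t * (b ^ 2 * cos φ * cos (w * t + φ) + a ^ 2 * sin φ * sin (w * t + φ))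
      - sin (w * t) < 0 := by
    have hcos := mul_mul_cos_lt_sin (by positivity) hA h0 hπ
    have hB : 0 ≤ w ^ 2 * (w * t) * (b ^ 2 - a ^ 2) * (sin φ * cos φ) * sin (w * t) := by
      have hab' := sub_nonneg.2 hab
      positivity
    rw [hinner]
    linear_combination hcos + hB
  have hprod : sin φ * cos φ * jacobianBracket a b φ w t < 0 := by
    rw [sin_mul_cos_mul_jacobianBracket a b φ w t hφ.ne']
    exact mul_neg_of_pos_of_neg hsin hfactor
  exact neg_of_mul_neg_right hprod hφ.le

/-- the explicit Jacobian determinant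
`D(t) = (1/r(t))·[(w₀³t(cotφ·r_max² − tanφ·r_min²) + 2)·sin s·cos s
        + (−w₀³t·r_max² − tanφ)·cos²s + (w₀³t·r_min² − cotφ)·sin²s]`,
with `w₀ = 1/√(r_min²+r_max²)`, `s = w₀t+φ` and
`r(t) = √(r_min²+(r_max²−r_min²)sin²s)`, vanishes at `t = 0`, and its first strictly
positive zero is exactly `t = π/w₀`. -/
theorem first_positive_zero_of_jacobian
    (rmin rmax φ : ℝ) (h1 : 0 < rmin) (h2 : rmin < rmax)
    (hφ : φ ∈ Set.Ioo (0:ℝ) (Real.pi / 2))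
    (w₀ : ℝ) (hw : w₀ = 1 / Real.sqrt (rmin ^ 2 + rmax ^ 2))
    (s : ℝ → ℝ) (hs : ∀ t, s t = w₀ * t + φ)
    (r : ℝ → ℝ)
    (hr : ∀ t, r t = Real.sqrt (rmin ^ 2 + (rmax ^ 2 - rmin ^ 2) * Real.sin (s t) ^ 2))
    (D : ℝ → ℝ)
    (hD : ∀ t, D t = (1 / r t) *
      ((w₀ ^ 3 * t * ((Real.cos φ / Real.sin φ) * rmax ^ 2 - Real.tan φ * rmin ^ 2) + 2) *
          Real.sin (s t) * Real.cos (s t)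
        + (-(w₀ ^ 3 * t * rmax ^ 2) - Real.tan φ) * Real.cos (s t) ^ 2
        + (w₀ ^ 3 * t * rmin ^ 2 - Real.cos φ / Real.sin φ) * Real.sin (s t) ^ 2)) :
    D 0 = 0 ∧ D (Real.pi / w₀) = 0 ∧ ∀ t ∈ Set.Ioo 0 (Real.pi / w₀), D t ≠ 0 := by
  obtain ⟨hφ0, hφ2⟩ := hφ
  have hsc : 0 < sin φ * cos φ :=
    mul_pos (sin_pos_of_pos_of_lt_pi hφ0 (by linarith [pi_pos]))
      (cos_pos_of_mem_Ioo ⟨by linarith, hφ2⟩)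
  have hrr : rmin ^ 2 < rmax ^ 2 := by nlinarith
  have hw0 : 0 < w₀ := by rw [hw]; positivity
  have hwS : w₀ ^ 2 * (rmin ^ 2 + rmax ^ 2) = 1 := by
    rw [hw, div_pow, one_pow, sq_sqrt (by positivity), one_div_mul_cancel (by positivity)]
  have hDt : ∀ t, D t = 1 / r t * jacobianBracket rmin rmax φ w₀ t := fun t => by
    rw [hD, hs]; rfl
  refine ⟨?_, ?_, fun t ⟨ht0, htπ⟩ => ?_⟩
  · rw [hDt, jacobianBracket_eq_zero hsc.ne' (by simp), mul_zero]
  · rw [hDt, jacobianBracket_eq_zero hsc.ne' (by rw [mul_div_cancel₀ _ hw0.ne', sin_pi]),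
      mul_zero]
  · have hr0 : 0 < r t := by
      rw [hr]
      exact sqrt_pos.2 (by nlinarith [mul_nonneg (sub_nonneg.2 hrr.le) (sq_nonneg (sin (s t)))])
    rw [hDt]
    refine (mul_neg_of_pos_of_neg (by positivity) (jacobianBracket_neg hsc hrr.le hwS.le ?_ ?_)).ne
    · positivity
    · rwa [lt_div_iff₀ hw0, mul_comm] at htπ
end
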